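/- arXiv:2503.10039 — 4 statements merged into one kernel-verified Lean document; each statement's English description precedes it below -/
import Mathlib

section
/- For β = 2 and any positive integer p, the critical value S_2(p) equals the value of the periodic expansion [(01^{p-1})^∞]_2 = (2^{p-1} − 1)/(2^p − 1). -/
open Function Filter

noncomputable section

/-- Left shift on sequences. -/
def shift (x : ℕ → ℕ) : ℕ → ℕ := fun i => x (i + 1)

/-- Strict lexicographic order on digit sequences. -/
def seqLt (x y : ℕ → ℕ) : Prop := ∃ n, (∀ i < n, x i = y i) ∧ x n < y n

/-- Non-strict lexicographic order. -/
def seqLe (x y : ℕ → ℕ) : Prop := seqLt x y ∨ x = y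

/-- The periodic sequence obtained by repeating the word `w`. -/
def wordSeq (w : List ℕ) : ℕ → ℕ := fun i => w.getD (i % w.length) 0

/-- The β-transformation x ↦ βx mod 1 on [0,1). -/
def Tmap (β : ℝ) : ℝ → ℝ := fun x => Int.fract (β * x)

/-- Survivor set of the open dynamical system with hole [0, t). -/
def K (β t : ℝ) : Set ℝ := {x | x ∈ Set.Ico (0:ℝ) 1 ∧ ∀ n : ℕ, t ≤ (Tmap β)^[n] x}

/-- The critical value `S_β(p)`. -/
def S (β : ℝ) (p : ℕ) : ℝ :=
  sSup {t | t ∈ Set.Ico (0:ℝ) 1 ∧ ∃ x ∈ K β t, Function.minimalPeriod (Tmap β) x = p}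

/-- Value of a digit sequence in base β. -/
def val (β : ℝ) (x : ℕ → ℕ) : ℝ := ∑' i, (x i : ℝ) / β ^ (i + 1)


section Aux

lemma orbitFormula (p : ℕ) (hp : 0 < p) (n : ℕ) :
    2 ^ n * (2 ^ p - 1 - 2 ^ (p - 1)) % (2 ^ p - 1)
      = (2 ^ p - 1) - 2 ^ ((n + (p - 1)) % p) := by
  have h2p : 2 ^ p = 2 * 2 ^ (p - 1) := by
    conv_lhs => rw [show p = (p - 1) + 1 by omega]
    ring
  have hpow1 : 1 ≤ 2 ^ (p - 1) := Nat.one_le_two_pow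
  induction n with
  | zero =>
    have h1 : (0 + (p - 1)) % p = p - 1 := by
      rw [Nat.zero_add]; exact Nat.mod_eq_of_lt (by omega)
    rw [h1, pow_zero, one_mul]
    exact Nat.mod_eq_of_lt (by omega)
  | succ n ih =>
    set N := 2 ^ p - 1 with hN
    set j := (n + (p - 1)) % p with hj
    have hjlt : j < p := Nat.mod_lt _ hp
    have hjpow : 2 ^ j ≤ 2 ^ (p - 1) := Nat.pow_le_pow_right (by norm_num) (by omega)
    have step : 2 ^ (n + 1) * (2 ^ p - 1 - 2 ^ (p - 1)) % N
        = 2 * (N - 2 ^ j) % N := by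
      rw [pow_succ, mul_comm (2 ^ n) 2, mul_assoc, Nat.mul_mod 2 _ N, ih, Nat.mod_mul_mod]
    rw [step]
    have hidx : ((n + 1) + (p - 1)) % p = (j + 1 % p) % p := by
      rw [show (n + 1) + (p - 1) = (n + (p - 1)) + 1 by omega, Nat.add_mod, ← hj]
    rcases Nat.lt_or_ge (j + 1) p with hcase | hcase
    · have h1p : 1 % p = 1 := Nat.mod_eq_of_lt (by omega)
      have hidx2 : ((n + 1) + (p - 1)) % p = j + 1 := by
        rw [hidx, h1p]; exact Nat.mod_eq_of_lt hcase
      rw [hidx2]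
      have hj1pow : 2 ^ (j + 1) ≤ 2 ^ (p - 1) := Nat.pow_le_pow_right (by norm_num) (by omega)
      have hj1pos : 1 ≤ 2 ^ (j + 1) := Nat.one_le_two_pow
      have hsplit : 2 * (N - 2 ^ j) = N + (N - 2 ^ (j + 1)) := by
        have h : 2 ^ (j + 1) = 2 * 2 ^ j := by ring
        omega
      rw [hsplit, Nat.add_mod_left]
      exact Nat.mod_eq_of_lt (by omega)
    · have hjeq : j = p - 1 := by omega
      have hidx2 : ((n + 1) + (p - 1)) % p = 0 := by
        rw [hidx, hjeq]
        rcases Nat.lt_or_ge p 2 with h | h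
        · have hp1 : p = 1 := by omega
          subst hp1; rfl
        · rw [Nat.mod_eq_of_lt (show 1 < p by omega), show p - 1 + 1 = p by omega,
            Nat.mod_self]
      rw [hidx2, hjeq, pow_zero]
      have hval : 2 * (N - 2 ^ (p - 1)) = N - 1 := by omega
      rw [hval]
      exact Nat.mod_eq_of_lt (by omega)

lemma existsSmall (p m : ℕ) (hp : 0 < p) (hm : m < 2 ^ p - 1) :
    ∃ n, 2 ^ n * m % (2 ^ p - 1) < 2 ^ (p - 1) := by
  set N := 2 ^ p - 1 with hN
  have h2p : 2 ^ p = 2 * 2 ^ (p - 1) := by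
    conv_lhs => rw [show p = (p - 1) + 1 by omega]
    ring
  have hpow1 : 1 ≤ 2 ^ (p - 1) := Nat.one_le_two_pow
  have hNpos : 0 < N := by omega
  by_contra hcon
  push_neg at hcon
  have hlt : ∀ n, 2 ^ n * m % N < N := fun n => Nat.mod_lt _ hNpos
  have hdec : ∀ n, 2 ^ (n + 1) * m % N < 2 ^ n * m % N := by
    intro n
    set a := 2 ^ n * m % N with ha
    have h1 : 2 ^ (p - 1) ≤ a := hcon n
    have h2 : a < N := hlt n
    have hstep : 2 ^ (n + 1) * m % N = 2 * a % N := by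
      rw [pow_succ, mul_comm (2 ^ n) 2, mul_assoc, Nat.mul_mod 2 _ N, ← ha, Nat.mod_mul_mod]
    have h2a : 2 * a % N = 2 * a - N := by
      rw [Nat.mod_eq_sub_mod (by omega)]
      exact Nat.mod_eq_of_lt (by omega)
    rw [hstep, h2a]; omega
  have hbound : ∀ n, 2 ^ n * m % N + n ≤ 2 ^ 0 * m % N := by
    intro n
    induction n with
    | zero => omega
    | succ k ih => have := hdec k; omega
  have := hbound (2 ^ 0 * m % N + 1)
  omega


lemma Tmap_iter (x : ℝ) (h0 : 0 ≤ x) (h1 : x < 1) (n : ℕ) :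
    (Tmap 2)^[n] x = Int.fract (2 ^ n * x) := by
  induction n with
  | zero => simp [Int.fract_eq_self.2 ⟨h0, h1⟩]
  | succ n ih =>
    rw [Function.iterate_succ_apply', ih]
    show Int.fract (2 * Int.fract (2 ^ n * x)) = _
    have h : (2:ℝ) * Int.fract (2 ^ n * x)
        = 2 ^ (n + 1) * x - ((2 * ⌊(2:ℝ) ^ n * x⌋ : ℤ) : ℝ) := by
      rw [Int.fract]; push_cast; ring
    rw [h, Int.fract_sub_intCast]

lemma fract_div (a N : ℕ) (hN : 0 < N) :
    Int.fract ((a : ℝ) / N) = ((a % N : ℕ) : ℝ) / N := by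
  have hNr : (0:ℝ) < N := by exact_mod_cast hN
  have hcast : (a : ℝ) = ((N : ℝ)) * ((a / N : ℕ) : ℝ) + ((a % N : ℕ) : ℝ) := by
    exact_mod_cast congrArg (Nat.cast : ℕ → ℝ) (Nat.div_add_mod a N).symm
  have key : (a : ℝ) / N = ((a / N : ℕ) : ℝ) + ((a % N : ℕ) : ℝ) / N := by
    rw [hcast]; field_simp
  rw [key, Int.fract_natCast_add, Int.fract_eq_self.2 ⟨by positivity, by
    rw [div_lt_one hNr]; exact_mod_cast Nat.mod_lt _ hN⟩]

lemma Tmap_iter_rat (a N : ℕ) (hN : 0 < N) (ha : a < N) (n : ℕ) :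
    (Tmap 2)^[n] ((a : ℝ) / N) = ((2 ^ n * a % N : ℕ) : ℝ) / N := by
  have hNr : (0:ℝ) < N := by exact_mod_cast hN
  have h0 : (0:ℝ) ≤ (a : ℝ) / N := by positivity
  have h1 : (a : ℝ) / N < 1 := by
    rw [div_lt_one hNr]; exact_mod_cast ha
  rw [Tmap_iter _ h0 h1, show (2:ℝ) ^ n * ((a:ℝ)/N) = ((2 ^ n * a : ℕ) : ℝ) / N by
    push_cast; ring, fract_div _ _ hN]

lemma geoAux (p : ℕ) (hp : 0 < p) :
    ∑ i ∈ Finset.range p, (if i = 0 then (0:ℝ) else 1 / 2 ^ (i + 1))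
      = 1 / 2 - 1 / 2 ^ p := by
  induction p, hp using Nat.le_induction with
  | base => norm_num
  | succ n hn ih =>
    rw [Finset.sum_range_succ, ih, if_neg (by omega)]
    have hpos : (0:ℝ) < 2 ^ n := by positivity
    field_simp
    ring

lemma digitAux (p : ℕ) (hp : 0 < p) (i : ℕ) :
    wordSeq (0 :: List.replicate (p - 1) 1) i = if i % p = 0 then 0 else 1 := by
  have hlen : (0 :: List.replicate (p - 1) (1:ℕ)).length = p := by
    simp [List.length_replicate]; omega
  unfold wordSeq
  rw [hlen]
  have hlt : i % p < p := Nat.mod_lt _ hp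
  rcases Nat.eq_zero_or_pos (i % p) with h | h
  · simp [h]
  · obtain ⟨k, hk⟩ : ∃ k, i % p = k + 1 := ⟨i % p - 1, by omega⟩
    have hk2 : k < p - 1 := by omega
    rw [hk, if_neg (by omega)]
    simp [List.getD, hk2]

lemma valEq (p : ℕ) (hp : 0 < p) :
    val 2 (wordSeq (0 :: List.replicate (p - 1) 1))
      = ((2:ℝ) ^ (p - 1) - 1) / ((2:ℝ) ^ p - 1) := by
  set f : ℕ → ℝ := fun i => ((wordSeq (0 :: List.replicate (p - 1) 1) i : ℕ) : ℝ) / 2 ^ (i + 1)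
    with hf
  have hfi : ∀ i, f i = if i % p = 0 then (0:ℝ) else 1 / 2 ^ (i + 1) := by
    intro i
    rw [hf]
    simp only [digitAux p hp i]
    split <;> simp
  have hg : Summable (fun i : ℕ => (1/2:ℝ) ^ (i + 1)) := by
    simpa [pow_succ, one_div] using summable_geometric_two.mul_right (2⁻¹:ℝ)
  have hle : ∀ i, f i ≤ (1/2:ℝ) ^ (i + 1) := by
    intro i
    rw [hfi, one_div_pow]
    split
    · positivity
    · exact le_refl _
  have h0 : ∀ i, 0 ≤ f i := fun i => by rw [hfi]; split <;> positivity
  have hsummable : Summable f := Summable.of_nonneg_of_le h0 hle hg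
  have hshift : ∀ i, f (i + p) = f i * (1 / 2 ^ p) := by
    intro i
    rw [hfi, hfi, Nat.add_mod_right]
    have : (2:ℝ) ^ (i + p + 1) = 2 ^ (i + 1) * 2 ^ p := by ring
    split
    · ring
    · rw [this]; field_simp
  have hkey := hsummable.sum_add_tsum_nat_add p
  have hC : ∑ i ∈ Finset.range p, f i = 1 / 2 - 1 / 2 ^ p := by
    rw [← geoAux p hp]
    apply Finset.sum_congr rfl
    intro i hi
    rw [hfi, Nat.mod_eq_of_lt (Finset.mem_range.mp hi)]
  have htail : ∑' i, f (i + p) = (∑' i, f i) * (1 / 2 ^ p) := by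
    simp_rw [hshift]
    exact tsum_mul_right
  rw [hC, htail] at hkey
  have hV : val 2 (wordSeq (0 :: List.replicate (p - 1) 1)) = ∑' i, f i := rfl
  rw [hV]
  set V := ∑' i, f i
  have h2p : (2:ℝ) ^ p = 2 * 2 ^ (p - 1) := by
    conv_lhs => rw [show p = (p - 1) + 1 by omega]
    ring
  have hppos : (0:ℝ) < 2 ^ (p - 1) := by positivity
  have h1le : (1:ℝ) ≤ 2 ^ (p - 1) := by
    calc (1:ℝ) = 1 ^ (p - 1) := (one_pow _).symm
    _ ≤ 2 ^ (p - 1) := pow_le_pow_left₀ (by norm_num) (by norm_num) _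
  have hne : (2:ℝ) ^ p - 1 ≠ 0 := by nlinarith
  have hne2 : (2:ℝ) ^ p ≠ 0 := by positivity
  rw [eq_div_iff hne]
  have : V * (1 - 1 / 2 ^ p) = 1 / 2 - 1 / 2 ^ p := by linarith
  field_simp at this ⊢
  nlinarith [this]

lemma Seq' (p : ℕ) (hp : 0 < p) :
    S 2 p = ((2:ℝ) ^ (p - 1) - 1) / ((2:ℝ) ^ p - 1) := by
  have h2p : (2:ℕ) ^ p = 2 * 2 ^ (p - 1) := by
    conv_lhs => rw [show p = (p - 1) + 1 by omega]
    ring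
  have hpow1 : 1 ≤ (2:ℕ) ^ (p - 1) := Nat.one_le_two_pow
  set N : ℕ := 2 ^ p - 1 with hN
  set m : ℕ := 2 ^ (p - 1) - 1 with hm
  have hNpos : 0 < N := by omega
  have hmN : m < N := by omega
  have hmN' : N - 2 ^ (p - 1) = m := by omega
  have hNr : (0:ℝ) < (N:ℝ) := by exact_mod_cast hNpos
  have hNcast : ((N:ℕ) : ℝ) = (2:ℝ) ^ p - 1 := by
    rw [hN, Nat.cast_sub Nat.one_le_two_pow]; push_cast; ring
  have hmcast : ((m:ℕ) : ℝ) = (2:ℝ) ^ (p - 1) - 1 := by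
    rw [hm, Nat.cast_sub Nat.one_le_two_pow]; push_cast; ring
  set v : ℝ := (m : ℝ) / (N : ℝ) with hv
  have hveq : v = ((2:ℝ) ^ (p - 1) - 1) / ((2:ℝ) ^ p - 1) := by
    rw [hv, hNcast, hmcast]
  -- orbit of v
  have horb : ∀ n : ℕ, (Tmap 2)^[n] v
      = ((N - 2 ^ ((n + (p - 1)) % p) : ℕ) : ℝ) / N := by
    intro n
    rw [hv, Tmap_iter_rat m N hNpos hmN n, ← hmN', orbitFormula p hp n]
  have hjle : ∀ n : ℕ, 2 ^ ((n + (p - 1)) % p) ≤ 2 ^ (p - 1) :=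
    fun n => Nat.pow_le_pow_right (by norm_num)
      (by have := Nat.mod_lt (n + (p - 1)) hp; omega)
  have hmono : ∀ n : ℕ, v ≤ (Tmap 2)^[n] v := by
    intro n
    rw [horb n, hv]
    apply (div_le_div_iff_of_pos_right hNr).mpr
    have h := hjle n
    exact_mod_cast (by omega : m ≤ N - 2 ^ ((n + (p - 1)) % p))
  -- v is in [0,1)
  have hv0 : 0 ≤ v := by positivity
  have hv1 : v < 1 := by
    rw [hv, div_lt_one hNr]; exact_mod_cast hmN
  -- v is periodic with minimal period p
  have hperiodic : (Tmap 2)^[p] v = v := by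
    rw [horb p, Nat.add_mod_left, Nat.mod_eq_of_lt (by omega : p - 1 < p), hmN', hv]
  have hper : Function.IsPeriodicPt (Tmap 2) p v := hperiodic
  have hminper : Function.minimalPeriod (Tmap 2) v = p := by
    have hqle := hper.minimalPeriod_le hp
    have hqpos := hper.minimalPeriod_pos hp
    set q := Function.minimalPeriod (Tmap 2) v with hq
    have hqper : (Tmap 2)^[q] v = v := Function.isPeriodicPt_minimalPeriod (Tmap 2) v
    rcases eq_or_lt_of_le hqle with h | hlt
    · exact h
    · exfalso
      rw [horb q, hv] at hqper
      have hnat : N - 2 ^ ((q + (p - 1)) % p) = m := by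
        field_simp [ne_of_gt hNr] at hqper
        exact_mod_cast hqper
      have hjN : 2 ^ ((q + (p - 1)) % p) ≤ N := le_trans (hjle q) (by omega)
      have hpow : 2 ^ ((q + (p - 1)) % p) = 2 ^ (p - 1) := by omega
      have hjeq : (q + (p - 1)) % p = p - 1 :=
        Nat.pow_right_injective (le_refl 2) hpow
      have hmod : (q + (p - 1)) % p = q - 1 := by
        rw [show q + (p - 1) = (q - 1) + p by omega, Nat.add_mod_right]
        exact Nat.mod_eq_of_lt (by omega)
      omega
  -- v belongs to the sup set
  have hvK : v ∈ K 2 v := ⟨⟨hv0, hv1⟩, hmono⟩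
  have hvA : v ∈ {t | t ∈ Set.Ico (0:ℝ) 1 ∧
      ∃ x ∈ K 2 t, Function.minimalPeriod (Tmap 2) x = p} :=
    ⟨⟨hv0, hv1⟩, v, hvK, hminper⟩
  -- v is an upper bound
  have hub : ∀ t ∈ {t | t ∈ Set.Ico (0:ℝ) 1 ∧
      ∃ x ∈ K 2 t, Function.minimalPeriod (Tmap 2) x = p}, t ≤ v := by
    rintro t ⟨⟨ht0, ht1⟩, x, ⟨⟨hx0, hx1⟩, hKx⟩, hminx⟩
    have hperx : Function.IsPeriodicPt (Tmap 2) p x := by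
      rw [← hminx]; exact Function.isPeriodicPt_minimalPeriod (Tmap 2) x
    have hfix : (Tmap 2)^[p] x = x := hperx
    rw [Tmap_iter x hx0 hx1] at hfix
    set z : ℤ := ⌊(2:ℝ) ^ p * x⌋ with hz
    have hzx : ((2:ℝ) ^ p - 1) * x = (z : ℝ) := by
      simp only [Int.fract] at hfix
      rw [← hz] at hfix
      linear_combination hfix
    have h2p1 : (0:ℝ) < (2:ℝ) ^ p - 1 := by
      rw [← hNcast]; exact hNr
    have hz0 : 0 ≤ z := by
      have : (0:ℝ) ≤ (z:ℝ) := by rw [← hzx]; positivity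
      exact_mod_cast this
    have hzN : (z:ℝ) < (N:ℝ) := by
      rw [← hzx, hNcast]
      nlinarith
    set a : ℕ := z.toNat with ha
    have hacast : ((a:ℕ) : ℝ) = (z : ℝ) := by
      rw [ha]; exact_mod_cast Int.toNat_of_nonneg hz0
    have haN : a < N := by
      have : ((a:ℕ):ℝ) < (N:ℝ) := by rw [hacast]; exact hzN
      exact_mod_cast this
    have hxa : x = (a : ℝ) / N := by
      rw [eq_div_iff (ne_of_gt hNr), hacast, ← hzx, hNcast]
      ring
    obtain ⟨n, hn⟩ := existsSmall p a hp haN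
    rw [← hN] at hn
    have := hKx n
    rw [hxa, Tmap_iter_rat a N hNpos haN n] at this
    refine le_trans this ?_
    rw [hv]
    apply (div_le_div_iff_of_pos_right hNr).mpr
    exact_mod_cast (by omega : 2 ^ n * a % N ≤ m)
  have : S 2 p = v := IsGreatest.csSup_eq ⟨hvA, hub⟩
  rw [this, hveq]

end Aux

theorem stmt2 (p : ℕ) (hp : 0 < p) :
    S 2 p = val 2 (wordSeq (0 :: List.replicate (p - 1) 1)) ∧
    S 2 p = ((2:ℝ) ^ (p - 1) - 1) / ((2:ℝ) ^ p - 1) := by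
  have hS := Seq' p hp
  have hval := valEq p hp
  exact ⟨hS.trans hval.symm, hS⟩
end
end

section
/- Let m ≥ 1. No periodic binary sequence x of smallest period 2m+1 satisfies (0(01)^m)^∞ ≺ σ^n(x) ≺ (10)^∞ for all n ≥ 0. -/
open Function Filter

noncomputable section

lemma shift_iterate (x : ℕ → ℕ) (k : ℕ) : shift^[k] x = fun i => x (i + k) := by
  induction k with
  | zero => rfl
  | succ n ih =>
    funext i
    rw [Function.iterate_succ_apply', ih]
    show x (i + 1 + n) = x (i + (n+1))
    congr 1
    omega

lemma flat_length (m : ℕ) : ((List.replicate m ([0,1] : List ℕ)).flatten).length = 2*m := by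
  induction m with
  | zero => rfl
  | succ n ih =>
    rw [List.replicate_succ, List.flatten_cons]
    simp only [List.length_append, ih, List.length_cons, List.length_nil]
    omega

lemma flat_getD (m : ℕ) : ∀ i, i < 2*m →
    ((List.replicate m ([0,1] : List ℕ)).flatten).getD i 0 = i % 2 := by
  induction m with
  | zero => intro i hi; omega
  | succ n ih =>
    intro i hi
    rw [List.replicate_succ, List.flatten_cons]
    match i with
    | 0 => rfl
    | 1 => rfl
    | (j+2) =>
      show ((List.replicate n ([0,1] : List ℕ)).flatten).getD j 0 = (j+2) % 2
      rw [ih j (by omega)]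
      omega

lemma W_eq (m r : ℕ) (hr : r < 2*m+1) :
    wordSeq (0 :: (List.replicate m ([0,1] : List ℕ)).flatten) r
      = if r = 0 then 0 else (r+1) % 2 := by
  have hlen : (0 :: (List.replicate m ([0,1]:List ℕ)).flatten).length = 2*m+1 := by
    simp [flat_length]; omega
  unfold wordSeq
  rw [hlen, Nat.mod_eq_of_lt hr]
  match r with
  | 0 => rfl
  | (j+1) =>
    rw [if_neg (by omega : (j:ℕ)+1 ≠ 0)]
    show ((List.replicate m ([0,1] : List ℕ)).flatten).getD j 0 = (j+2) % 2
    rw [flat_getD m j (by omega)]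
    omega

lemma W_mod (m n : ℕ) :
    wordSeq (0 :: (List.replicate m ([0,1] : List ℕ)).flatten) n
      = wordSeq (0 :: (List.replicate m ([0,1] : List ℕ)).flatten) (n % (2*m+1)) := by
  have hlen : (0 :: (List.replicate m ([0,1]:List ℕ)).flatten).length = 2*m+1 := by
    simp [flat_length]; omega
  unfold wordSeq
  rw [hlen, Nat.mod_mod_of_dvd n dvd_rfl]

lemma ten_eq (n : ℕ) : wordSeq [1,0] n = if n % 2 = 0 then 1 else 0 := by
  unfold wordSeq
  have : n % 2 = 0 ∨ n % 2 = 1 := by omega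
  rcases this with h | h <;> rw [show ([1,0]:List ℕ).length = 2 from rfl, h] <;> rfl

theorem stmt5 (m : ℕ) (hm : 1 ≤ m) (x : ℕ → ℕ) (hx : ∀ i, x i ≤ 1)
    (hper : Function.minimalPeriod shift x = 2 * m + 1)
    (h : ∀ n : ℕ, seqLt (wordSeq (0 :: (List.replicate m ([0,1] : List ℕ)).flatten)) (shift^[n] x) ∧
      seqLt (shift^[n] x) (wordSeq [1, 0])) : False := by
  set W := wordSeq (0 :: (List.replicate m ([0,1] : List ℕ)).flatten) with hWdef
  have hx' : ∀ i, x i = 0 ∨ x i = 1 := fun i => by have := hx i; omega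
  -- periodicity
  have hper' : ∀ i, x (i + (2*m+1)) = x i := by
    have h1 : shift^[2*m+1] x = x := by
      rw [show 2*m+1 = Function.minimalPeriod shift x from hper.symm]
      exact Function.isPeriodicPt_minimalPeriod shift x
    intro i
    have h2 := congrFun h1 i
    rwa [shift_iterate] at h2
  -- lower bound, rephrased
  have hlow : ∀ i : ℕ, ∃ n, (∀ j < n, W j = x (j + i)) ∧ W n < x (n + i) := by
    intro i
    obtain ⟨n, heq, hlt⟩ := (h i).1
    rw [shift_iterate] at heq hlt
    exact ⟨n, heq, hlt⟩
  -- no 11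
  have no11 : ∀ i, x i = 1 → x (i+1) = 0 := by
    intro i h1
    rcases hx' (i+1) with h2 | h2
    · exact h2
    exfalso
    obtain ⟨n, heq, hlt⟩ := (h i).2
    rw [shift_iterate] at heq hlt
    simp only at heq hlt
    rw [ten_eq] at hlt
    match n, heq, hlt with
    | 0, heq, hlt =>
      rw [show (if 0 % 2 = 0 then 1 else 0 : ℕ) = 1 from rfl, Nat.zero_add] at hlt
      omega
    | 1, heq, hlt =>
      rw [show (if 1 % 2 = 0 then 1 else 0 : ℕ) = 0 from rfl] at hlt
      omega
    | (k+2), heq, hlt =>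
      have h3 := heq 1 (by omega)
      rw [ten_eq, show (if 1 % 2 = 0 then 1 else 0 : ℕ) = 0 from rfl,
        show 1 + i = i + 1 from by omega] at h3
      omega
  -- no 000
  have no000 : ∀ i, x i = 0 → x (i+1) = 0 → x (i+2) = 1 := by
    intro i h0 h1
    rcases hx' (i+2) with h2 | h2
    swap
    · exact h2
    exfalso
    obtain ⟨n, heq, hlt⟩ := hlow i
    match n, heq, hlt with
    | 0, heq, hlt => rw [Nat.zero_add, h0] at hlt; omega
    | 1, heq, hlt => rw [show 1 + i = i + 1 from by omega, h1] at hlt; omega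
    | 2, heq, hlt => rw [show 2 + i = i + 2 from by omega, h2] at hlt; omega
    | (k+3), heq, hlt =>
      have h3 := heq 2 (by omega)
      rw [hWdef, W_eq m 2 (by omega), show 2 + i = i + 2 from by omega] at h3
      norm_num at h3
      omega
  -- a 00 exists
  have ex00 : ∃ d, x d = 0 ∧ x (d+1) = 0 := by
    by_contra hno
    push_neg at hno
    have h2 : ∀ i, x (i+2) = x i := by
      intro i
      rcases hx' i with h0 | h1
      · have hb : x (i+1) = 1 := by
          rcases hx' (i+1) with hb | hb
          · exact absurd hb (hno i h0)
          · exact hb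
        rw [no11 _ hb, h0]
      · rw [h1]
        have hz := no11 i h1
        rcases hx' (i+2) with hc | hc
        · exact absurd hc (hno (i+1) hz)
        · exact hc
    have hpp : Function.IsPeriodicPt shift 2 x := by
      show shift^[2] x = x
      rw [shift_iterate]
      funext i
      exact h2 i
    have hdvd := hpp.minimalPeriod_dvd
    rw [hper] at hdvd
    have := Nat.le_of_dvd (by norm_num) hdvd
    omega
  obtain ⟨d, hd0, hd1⟩ := ex00
  -- next 00 after d
  have hQp : 0 < 2*m+1 ∧ x (d+(2*m+1)) = 0 ∧ x (d+(2*m+1)+1) = 0 := by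
    refine ⟨by omega, ?_, ?_⟩
    · rw [hper' d]; exact hd0
    · rw [show d + (2*m+1) + 1 = (d+1) + (2*m+1) from by omega, hper' (d+1)]; exact hd1
  have hex : ∃ j, 0 < j ∧ x (d+j) = 0 ∧ x (d+j+1) = 0 := ⟨2*m+1, hQp⟩
  set g := Nat.find hex with hgdef
  have hg := Nat.find_spec hex
  have hgle : g ≤ 2*m+1 := Nat.find_le hQp
  have hmin : ∀ j < g, ¬ (0 < j ∧ x (d+j) = 0 ∧ x (d+j+1) = 0) := fun j hj => Nat.find_min hex hj
  -- alternation up to g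
  have halt : ∀ j, 1 ≤ j → j ≤ g → x (d + j) = (j+1) % 2 := by
    intro j
    induction j with
    | zero => omega
    | succ k ih =>
      intro h1 h2
      rcases Nat.eq_zero_or_pos k with hk | hk
      · subst hk
        rw [show (1+1) % 2 = 0 from rfl]
        exact hd1
      have hkk := ih (by omega) (by omega)
      have hnk := hmin k (by omega)
      have hnk' : ¬ (x (d+k) = 0 ∧ x (d+k+1) = 0) := fun hc => hnk ⟨hk, hc⟩
      have hidx : d + (k+1) = d + k + 1 := by omega
      rw [hidx]
      have : (k+1) % 2 = 0 ∨ (k+1) % 2 = 1 := by omega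
      rcases this with hp2 | hp2
      · rw [hp2] at hkk
        rcases hx' (d+k+1) with hc | hc
        · exact absurd ⟨hkk, hc⟩ hnk'
        · rw [hc]; omega
      · rw [hp2] at hkk
        rw [no11 _ hkk]
        omega
  have godd : (g+1) % 2 = 0 := by
    have h1 := halt g hg.1 le_rfl
    rw [hg.2.1] at h1
    omega
  rcases eq_or_lt_of_le hgle with hgg | hgg
  · -- g = 2*m+1 : x agrees with W from d on, contradiction with strict lower bound at d
    have hper_mul : ∀ k i, x (i + k*(2*m+1)) = x i := by
      intro k
      induction k with
      | zero => intro i; simp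
      | succ n ih =>
        intro i
        rw [show i + (n+1)*(2*m+1) = (i + n*(2*m+1)) + (2*m+1) from by ring, hper', ih]
    have hxW : ∀ n, x (d + n) = W n := by
      intro n
      have e1 : x (d + n) = x (d + n % (2*m+1)) := by
        conv_lhs => rw [← Nat.mod_add_div n (2*m+1)]
        rw [show d + (n % (2*m+1) + (2*m+1) * (n / (2*m+1)))
              = (d + n % (2*m+1)) + (n / (2*m+1)) * (2*m+1) from by ring]
        exact hper_mul _ _
      rw [e1, hWdef, W_mod]
      have hr : n % (2*m+1) < 2*m+1 := Nat.mod_lt _ (by omega)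
      rcases Nat.eq_zero_or_pos (n % (2*m+1)) with h0 | h0
      · rw [h0, Nat.add_zero, hd0, W_eq m 0 (by omega)]
        rfl
      · rw [halt _ h0 (by omega), W_eq m _ hr, if_neg (by omega)]
    obtain ⟨n, heq, hlt⟩ := hlow d
    rw [show n + d = d + n from by omega, hxW n] at hlt
    omega
  · -- g < 2*m+1 : x is below W at position g+1, contradiction
    have hg1 : g + 1 < 2*m+1 := by omega
    have hxWj : ∀ j ≤ g, x (d+j) = W j := by
      intro j hj
      rcases Nat.eq_zero_or_pos j with h0 | h0
      · rw [h0, Nat.add_zero, hd0, hWdef, W_eq m 0 (by omega)]; rfl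
      · rw [halt j h0 hj, hWdef, W_eq m j (by omega), if_neg (by omega)]
    have hx2 : x (d + (g+1)) = 0 := by
      rw [show d + (g+1) = d + g + 1 from by omega]
      exact hg.2.2
    have hW2 : W (g+1) = 1 := by
      rw [hWdef, W_eq m (g+1) hg1, if_neg (by omega)]
      omega
    obtain ⟨n, heq, hlt⟩ := hlow d
    rcases lt_trichotomy n (g+1) with hn | hn | hn
    · rw [show n + d = d + n from by omega, hxWj n (by omega)] at hlt
      omega
    · rw [hn, show g + 1 + d = d + (g+1) from by omega, hx2] at hlt
      omega
    · have h3 := heq (g+1) hn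
      rw [hW2, show g + 1 + d = d + (g+1) from by omega, hx2] at h3
      omega
end
end

section
/- For β = (1+√5)/2 and any integer m ≥ 2, S_β(4m+2) = [(001(01)^{m-2}001(01)^m)^∞]_β. -/
open Function Filter

set_option linter.unusedSectionVars false
set_option linter.unusedVariables false
set_option maxHeartbeats 1000000

noncomputable section

namespace GoldenAux

def tail (n : ℕ) (u : ℕ → ℕ) : ℕ → ℕ := fun i => u (n + i)

def Bin (u : ℕ → ℕ) : Prop := ∀ i, u i ≤ 1
def NF (u : ℕ → ℕ) : Prop := ∀ i, u i = 1 → u (i + 1) = 0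
def Rich (u : ℕ → ℕ) : Prop := ∀ k, ∃ j, k ≤ j ∧ u j = 0 ∧ u (j + 1) = 0

lemma tail_bin {u : ℕ → ℕ} (hu : Bin u) (n : ℕ) : Bin (tail n u) := fun i => hu _
lemma tail_nf {u : ℕ → ℕ} (hu : NF u) (n : ℕ) : NF (tail n u) := by
  intro i h
  exact hu (n+i) h
lemma tail_rich {u : ℕ → ℕ} (hu : Rich u) (n : ℕ) : Rich (tail n u) := by
  intro k
  obtain ⟨j, hj, h0, h01⟩ := hu (n + k)
  exact ⟨j - n, by omega, by simpa [tail, Nat.add_sub_cancel' (by omega : n ≤ j)] , by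
    have : n + (j - n + 1) = j + 1 := by omega
    simp [tail, this, h01]⟩

lemma tail_tail (u : ℕ → ℕ) (a b : ℕ) : tail a (tail b u) = tail (b + a) u := by
  funext i; simp [tail]; ring_nf

variable {β : ℝ}

lemma beta_facts (hβ : β = (1 + Real.sqrt 5) / 2) : 1 < β ∧ β < 2 ∧ β ^ 2 = β + 1 := by
  have h5 : (0:ℝ) ≤ 5 := by norm_num
  have hs : Real.sqrt 5 ^ 2 = 5 := Real.sq_sqrt h5
  have h1 : 1 < Real.sqrt 5 := by nlinarith [Real.sqrt_nonneg 5]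
  have h2 : Real.sqrt 5 < 3 := by nlinarith [Real.sqrt_nonneg 5]
  subst hβ
  refine ⟨by linarith, by linarith, by nlinarith⟩

section val

variable (h1 : 1 < β)
include h1

lemma bpos : (0:ℝ) < β := by linarith

lemma summable_vterm (u : ℕ → ℕ) (hu : Bin u) :
    Summable (fun i => (u i : ℝ) / β ^ (i + 1)) := by
  have hb0 : (0:ℝ) < β := bpos h1
  have hgeo : Summable (fun i : ℕ => (1/β) * (1/β) ^ i) := by
    refine Summable.mul_left _ (summable_geometric_of_lt_one (by positivity) ?_)
    rw [div_lt_one hb0]; linarith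
  refine Summable.of_nonneg_of_le (fun i => by positivity) (fun i => ?_) hgeo
  have : ((u i : ℝ)) ≤ 1 := by exact_mod_cast hu i
  rw [div_le_iff₀ (by positivity)]
  calc (u i : ℝ) ≤ 1 := this
    _ = (1/β) * (1/β)^i * β^(i+1) := by rw [div_pow, one_pow, pow_succ]; field_simp
    _ ≤ _ := le_refl _

lemma val_nonneg (u : ℕ → ℕ) : 0 ≤ val β u :=
  tsum_nonneg (fun i => by positivity)

lemma val_split (u : ℕ → ℕ) (hu : Bin u) (n : ℕ) :
    val β u = (∑ i ∈ Finset.range n, (u i : ℝ) / β ^ (i + 1)) + (1/β^n) * val β (tail n u) := by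
  have hs := summable_vterm h1 u hu
  have h := Summable.sum_add_tsum_nat_add (f := fun i => (u i : ℝ)/β^(i+1)) n hs
  rw [val, ← h]
  congr 1
  rw [val, ← tsum_mul_left]
  congr 1; funext i
  simp only [tail]
  rw [show i + n + 1 = n + (i+1) by ring, show n + i = i + n from by ring, pow_add]
  have hb : (0:ℝ) < β := bpos h1
  field_simp

lemma val_step (u : ℕ → ℕ) (hu : Bin u) :
    val β u = (u 0 : ℝ)/β + (1/β) * val β (tail 1 u) := by
  have := val_split h1 u hu 1
  simpa using this



def valP (β : ℝ) (n : ℕ) (u : ℕ → ℕ) : ℝ := ∑ i ∈ Finset.range n, (u i : ℝ) / β ^ (i + 1)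

lemma valP_succ (n : ℕ) (u : ℕ → ℕ) :
    valP β (n+1) u = (u 0 : ℝ)/β + (1/β) * valP β n (tail 1 u) := by
  have hb : (0:ℝ) < β := bpos h1
  have hterm : ∀ i : ℕ, (u (i+1) : ℝ)/β^(i+1+1) = (1/β) * ((tail 1 u i : ℝ)/β^(i+1)) := by
    intro i
    simp only [tail]
    rw [show 1 + i = i + 1 from by ring, pow_succ, div_mul_div_comm, one_mul, mul_comm β]
  rw [valP, Finset.sum_range_succ']
  simp only [hterm]
  rw [← Finset.mul_sum, pow_one, valP]
  ring

lemma val_eq_lim (u : ℕ → ℕ) (hu : Bin u) :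
    Tendsto (fun n => valP β n u) atTop (nhds (val β u)) :=
  (summable_vterm h1 u hu).hasSum.tendsto_sum_nat

section golden
variable (h2 : β ^ 2 = β + 1)
include h2

lemma inv_id : 1/β + 1/β^2 = 1 := by
  have hb : (0:ℝ) < β := bpos h1
  field_simp
  nlinarith

lemma inv_lt : (0:ℝ) < 1/β ∧ 1/β < 1 := by
  have hb : (0:ℝ) < β := bpos h1
  constructor
  · positivity
  · rw [div_lt_one hb]; exact h1

lemma valP_bound : ∀ n : ℕ, ∀ u : ℕ → ℕ, Bin u → NF u →
    valP β n u ≤ 1 - (1/β)^(n+1) := by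
  have hb : (0:ℝ) < β := bpos h1
  have hinv := inv_id h1 h2
  have hi0 : (0:ℝ) < 1/β := (inv_lt h1 h2).1
  have hi1 : 1/β < 1 := (inv_lt h1 h2).2
  intro n
  induction n using Nat.strong_induction_on with
  | _ n ih =>
    match n with
    | 0 =>
      intro u hu hnf
      simp only [valP, Finset.range_zero, Finset.sum_empty]
      have he : (1/β)^(0+1) = 1/β := by norm_num
      rw [he]; linarith
    | 1 =>
      intro u hu hnf
      have h0 : (u 0 : ℝ) ≤ 1 := by exact_mod_cast hu 0
      have hP : valP β 1 u = (u 0 : ℝ)/β := by simp [valP]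
      rw [hP]
      have hsq : (1/β)^(1+1) = 1/β^2 := by norm_num [div_pow]
      have hle : (u 0 : ℝ)/β ≤ 1/β := by gcongr
      rw [hsq]; linarith
    | (k+2) =>
      intro u hu hnf
      rcases Nat.le_one_iff_eq_zero_or_eq_one.mp (hu 0) with h0 | h0
      · rw [valP_succ h1, h0]
        simp only [Nat.cast_zero, zero_div, zero_add]
        have hih := ih (k+1) (by omega) (tail 1 u) (tail_bin hu 1) (tail_nf hnf 1)
        calc (1/β) * valP β (k+1) (tail 1 u) ≤ (1/β) * (1 - (1/β)^(k+1+1)) :=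
              mul_le_mul_of_nonneg_left hih (le_of_lt hi0)
          _ = 1/β - (1/β)^(k+3) := by ring
          _ ≤ 1 - (1/β)^(k+2+1) := by
              have : (1/β)^(k+2+1) = (1/β)^(k+3) := by norm_num
              rw [this]; linarith
      · have h1' : u 1 = 0 := hnf 0 h0
        rw [valP_succ h1, valP_succ h1, h0]
        have ht0 : (tail 1 u) 0 = 0 := by simpa [tail] using h1'
        rw [ht0]
        simp only [Nat.cast_zero, Nat.cast_one, zero_div, zero_add]
        have hih := ih k (by omega) (tail 1 (tail 1 u)) (tail_bin (tail_bin hu 1) 1)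
          (tail_nf (tail_nf hnf 1) 1)
        have hmul : (1/β) * ((1/β) * valP β k (tail 1 (tail 1 u)))
            ≤ (1/β) * ((1/β) * (1 - (1/β)^(k+1))) := by
          apply mul_le_mul_of_nonneg_left ?_ (le_of_lt hi0)
          exact mul_le_mul_of_nonneg_left hih (le_of_lt hi0)
        calc (1:ℝ)/β + (1/β) * ((1/β) * valP β k (tail 1 (tail 1 u)))
            ≤ 1/β + (1/β) * ((1/β) * (1 - (1/β)^(k+1))) := by linarith
          _ = 1/β + 1/β^2 - (1/β)^(k+3) := by
              rw [div_pow, one_pow]; ring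
          _ = 1 - (1/β)^(k+2+1) := by
              have : (1/β)^(k+2+1) = (1/β)^(k+3) := by norm_num
              rw [this, hinv]

lemma val_le_one (u : ℕ → ℕ) (hu : Bin u) (hnf : NF u) : val β u ≤ 1 := by
  refine le_of_tendsto (val_eq_lim h1 u hu) (Filter.Eventually.of_forall (fun n => ?_))
  have := valP_bound h1 h2 n u hu hnf
  have hi0 : (0:ℝ) < 1/β := (inv_lt h1 h2).1
  have : (0:ℝ) < (1/β)^(n+1) := by positivity
  linarith [valP_bound h1 h2 n u hu hnf]

lemma val_le_of_00 (u : ℕ → ℕ) (hu : Bin u) (hnf : NF u) (n : ℕ)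
    (e0 : u n = 0) (e1 : u (n+1) = 0) : val β u ≤ 1 - (1/β)^(n+3) := by
  have hb : (0:ℝ) < β := bpos h1
  have hi0 : (0:ℝ) < 1/β := (inv_lt h1 h2).1
  have hinv := inv_id h1 h2
  have hsplit := val_split h1 u hu n
  have hs1 : val β (tail n u) = (1/β) * val β (tail 1 (tail n u)) := by
    rw [val_step h1 (tail n u) (tail_bin hu n)]
    simp [tail, e0]
  have hs2 : val β (tail 1 (tail n u)) = (1/β) * val β (tail 1 (tail 1 (tail n u))) := by
    rw [val_step h1 _ (tail_bin (tail_bin hu n) 1)]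
    simp [tail, e1]
  have hle : val β (tail 1 (tail 1 (tail n u))) ≤ 1 :=
    val_le_one h1 h2 _ (tail_bin (tail_bin (tail_bin hu n) 1) 1)
      (tail_nf (tail_nf (tail_nf hnf n) 1) 1)
  have hP := valP_bound h1 h2 n u hu hnf
  have hval : val β u ≤ (1 - (1/β)^(n+1)) + (1/β^n) * ((1/β) * ((1/β) * 1)) := by
    rw [hsplit, hs1, hs2]
    have hnn : (0:ℝ) ≤ 1/β^n := by positivity
    have : (1/β) * ((1/β) * val β (tail 1 (tail 1 (tail n u)))) ≤ (1/β) * ((1/β) * 1) := by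
      apply mul_le_mul_of_nonneg_left (mul_le_mul_of_nonneg_left hle (le_of_lt hi0)) (le_of_lt hi0)
    rw [valP] at hP
    have := mul_le_mul_of_nonneg_left this hnn
    linarith
  have hiden : (1/β)^(n+1) - (1/β)^(n+2) = (1/β)^(n+3) := by
    have h1b : 1 - 1/β = (1/β)^2 := by rw [div_pow, one_pow]; linarith
    calc (1/β)^(n+1) - (1/β)^(n+2) = (1/β)^(n+1) * (1 - 1/β) := by ring
      _ = (1/β)^(n+1) * (1/β)^2 := by rw [h1b]
      _ = (1/β)^(n+3) := by rw [← pow_add]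
  have : (1/β^n) * ((1/β) * ((1/β) * 1)) = (1/β)^(n+2) := by
    rw [div_pow, one_pow] at *
    field_simp
    ring
  rw [this] at hval
  linarith

lemma val_lt_one (u : ℕ → ℕ) (hu : Bin u) (hnf : NF u) (hr : Rich u) : val β u < 1 := by
  obtain ⟨j, _, e0, e1⟩ := hr 0
  have := val_le_of_00 h1 h2 u hu hnf j e0 e1
  have hi0 : (0:ℝ) < 1/β := (inv_lt h1 h2).1
  have : (0:ℝ) < (1/β)^(j+3) := by positivity
  linarith [val_le_of_00 h1 h2 u hu hnf j e0 e1]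

lemma val_head_one (u : ℕ → ℕ) (hu : Bin u) (e : u 0 = 1) : 1/β ≤ val β u := by
  have hb : (0:ℝ) < β := bpos h1
  rw [val_step h1 u hu, e]
  have h0 : (0:ℝ) ≤ (1/β) * val β (tail 1 u) :=
    mul_nonneg (by positivity) (val_nonneg h1 _)
  push_cast
  linarith

lemma val_head_zero (u : ℕ → ℕ) (hu : Bin u) (hnf : NF u) (hr : Rich u) (e : u 0 = 0) :
    val β u < 1/β := by
  have hb : (0:ℝ) < β := bpos h1
  have hi0 : (0:ℝ) < 1/β := (inv_lt h1 h2).1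
  rw [val_step h1 u hu, e]
  have hlt : val β (tail 1 u) < 1 :=
    val_lt_one h1 h2 _ (tail_bin hu 1) (tail_nf hnf 1) (tail_rich hr 1)
  have hkey : (1/β) * val β (tail 1 u) < (1/β) * 1 := mul_lt_mul_of_pos_left hlt hi0
  simp only [Nat.cast_zero, zero_div, zero_add]
  linarith

lemma lex_val_lt (x y : ℕ → ℕ) (hx : Bin x) (hnx : NF x) (hrx : Rich x)
    (hy : Bin y) (n : ℕ) (hagree : ∀ i < n, x i = y i) (hlt : x n < y n) :
    val β x < val β y := by
  have hb : (0:ℝ) < β := bpos h1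
  have hxn : x n = 0 := by have := hy n; omega
  have hyn : y n = 1 := by have := hy n; omega
  have hsx := val_split h1 x hx n
  have hsy := val_split h1 y hy n
  have heq : (∑ i ∈ Finset.range n, (x i:ℝ)/β^(i+1)) = ∑ i ∈ Finset.range n, (y i:ℝ)/β^(i+1) := by
    refine Finset.sum_congr rfl (fun i hi => ?_)
    rw [hagree i (Finset.mem_range.mp hi)]
  have htx : val β (tail n x) < 1/β := by
    apply val_head_zero h1 h2 _ (tail_bin hx n) (tail_nf hnx n) (tail_rich hrx n)
    simpa [tail] using hxn
  have hty : 1/β ≤ val β (tail n y) := by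
    apply val_head_one h1 h2 _ (tail_bin hy n)
    simpa [tail] using hyn
  have hpow : (0:ℝ) < 1/β^n := by positivity
  have key := mul_lt_mul_of_pos_left (lt_of_lt_of_le htx hty) hpow
  rw [hsx, hsy]
  linarith

lemma val_mono_seqLe (x y : ℕ → ℕ) (hx : Bin x) (hnx : NF x) (hrx : Rich x)
    (hy : Bin y) (h : seqLt x y ∨ x = y) : val β x ≤ val β y := by
  rcases h with ⟨n, hagree, hlt⟩ | rfl
  · exact le_of_lt (lex_val_lt h1 h2 x y hx hnx hrx hy n hagree hlt)
  · exact le_refl _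

end golden
end val

section tmap

variable (h1 : 1 < β) (h2 : β ^ 2 = β + 1)
include h1

omit h1 in
lemma Tmap_mem (x : ℝ) : Tmap β x ∈ Set.Ico (0:ℝ) 1 := ⟨Int.fract_nonneg _, Int.fract_lt_one _⟩

omit h1 in
lemma iter_mem {x : ℝ} (hx : x ∈ Set.Ico (0:ℝ) 1) (n : ℕ) :
    (Tmap β)^[n] x ∈ Set.Ico (0:ℝ) 1 := by
  cases n with
  | zero => exact hx
  | succ n => rw [iterate_succ_apply']; exact Tmap_mem _

def digits (β : ℝ) (x : ℝ) : ℕ → ℕ := fun n => (⌊β * ((Tmap β)^[n] x)⌋).toNat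

lemma floor_nonneg_of_mem {y : ℝ} (hy : y ∈ Set.Ico (0:ℝ) 1) : 0 ≤ ⌊β * y⌋ := by
  have hb : (0:ℝ) < β := bpos h1
  apply Int.floor_nonneg.mpr
  nlinarith [hy.1]

lemma digits_cast {x : ℝ} (hx : x ∈ Set.Ico (0:ℝ) 1) (n : ℕ) :
    ((digits β x n : ℝ)) = (⌊β * ((Tmap β)^[n] x)⌋ : ℤ) := by
  have := floor_nonneg_of_mem h1 (iter_mem (β := β) hx n)
  simp only [digits]
  exact_mod_cast Int.toNat_of_nonneg this

include h2 in
lemma digits_bin {x : ℝ} (hx : x ∈ Set.Ico (0:ℝ) 1) : Bin (digits β x) := by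
  intro n
  have hmem := iter_mem (β := β) hx n
  have hb : (0:ℝ) < β := bpos h1
  have h2' : β < 2 := by nlinarith
  have hlt : β * ((Tmap β)^[n] x) < 2 := by nlinarith [hmem.1, hmem.2]
  have : ⌊β * ((Tmap β)^[n] x)⌋ < 2 := by
    apply Int.floor_lt.mpr; exact_mod_cast hlt
  simp only [digits]
  omega

lemma Tmap_eq_sub (y : ℝ) : Tmap β y = β * y - ⌊β * y⌋ := rfl

lemma Tmap_step {x : ℝ} (hx : x ∈ Set.Ico (0:ℝ) 1) (n : ℕ) :
    (Tmap β)^[n+1] x = β * ((Tmap β)^[n] x) - (digits β x n : ℝ) := by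
  rw [iterate_succ_apply', Tmap_eq_sub h1, digits_cast h1 hx n]

include h2 in
lemma digits_nf {x : ℝ} (hx : x ∈ Set.Ico (0:ℝ) 1) : NF (digits β x) := by
  intro n hdn
  have hb : (0:ℝ) < β := bpos h1
  have hmem := iter_mem (β := β) hx n
  have hmem' := iter_mem (β := β) hx (n+1)
  have hcast := digits_cast h1 hx n
  rw [hdn] at hcast
  have hfl : (1:ℝ) ≤ β * ((Tmap β)^[n] x) := by
    have := Int.floor_le (β * ((Tmap β)^[n] x))
    rw [← hcast] at this
    push_cast at this
    linarith
  have hstep := Tmap_step h1 hx n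
  rw [hdn] at hstep
  have hT1 : (Tmap β)^[n+1] x = β * ((Tmap β)^[n] x) - 1 := by rw [hstep]; norm_num
  have hup : β * ((Tmap β)^[n] x) < β := by nlinarith [hmem.2, hmem.1]
  have hlt1 : β * ((Tmap β)^[n+1] x) < 1 := by nlinarith [hmem'.1]
  have hge0 : (0:ℝ) ≤ β * ((Tmap β)^[n+1] x) := by nlinarith [hmem'.1]
  have hfz : ⌊β * ((Tmap β)^[n+1] x)⌋ = 0 := by
    apply Int.floor_eq_zero_iff.mpr
    constructor <;> [exact hge0; exact hlt1]
  show (⌊β * ((Tmap β)^[n+1] x)⌋).toNat = 0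
  rw [hfz]
  rfl

lemma tail_digits (x : ℝ) (k : ℕ) : tail k (digits β x) = digits β ((Tmap β)^[k] x) := by
  funext n
  simp only [tail, digits]
  rw [add_comm k n, iterate_add_apply]

lemma digits_partial {x : ℝ} (hx : x ∈ Set.Ico (0:ℝ) 1) (n : ℕ) :
    valP β n (digits β x) = x - (1/β^n) * ((Tmap β)^[n] x) := by
  have hb : (0:ℝ) < β := bpos h1
  induction n with
  | zero => simp [valP]
  | succ n ih =>
    rw [valP, Finset.sum_range_succ, ← valP, ih]
    have hstep := Tmap_step h1 hx n
    have hpow : (0:ℝ) < β^n := by positivity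
    have hpow1 : (0:ℝ) < β^(n+1) := by positivity
    rw [hstep]
    field_simp
    ring

include h2 in
lemma val_digits {x : ℝ} (hx : x ∈ Set.Ico (0:ℝ) 1) : val β (digits β x) = x := by
  have hb : (0:ℝ) < β := bpos h1
  have hbin := digits_bin h1 h2 hx
  have hlim := val_eq_lim h1 (digits β x) hbin
  have hlim2 : Tendsto (fun n => valP β n (digits β x)) atTop (nhds x) := by
    have heq : ∀ n, valP β n (digits β x) = x - (1/β^n) * ((Tmap β)^[n] x) :=
      digits_partial h1 hx
    rw [show (fun n => valP β n (digits β x)) = (fun n => x - (1/β^n) * ((Tmap β)^[n] x)) from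
      funext heq]
    have hz : Tendsto (fun n : ℕ => (1/β^n) * ((Tmap β)^[n] x)) atTop (nhds 0) := by
      apply squeeze_zero (fun n => ?_) (fun n => ?_)
        (tendsto_pow_atTop_nhds_zero_of_lt_one (le_of_lt (inv_lt h1 h2).1) (inv_lt h1 h2).2)
      · have := (iter_mem (β := β) hx n).1
        positivity
      · have hmem := iter_mem (β := β) hx n
        have hp : (0:ℝ) < β^n := by positivity
        calc (1/β^n) * ((Tmap β)^[n] x) ≤ (1/β^n) * 1 := by
              apply mul_le_mul_of_nonneg_left (le_of_lt hmem.2) (by positivity)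
          _ = (1/β)^n := by rw [mul_one, div_pow, one_pow]
    have := Tendsto.const_sub x hz
    simpa using this
  exact tendsto_nhds_unique hlim hlim2

include h2 in
lemma Tmap_val (u : ℕ → ℕ) (hu : Bin u) (hnf : NF u) (hr : Rich u) :
    Tmap β (val β u) = val β (tail 1 u) := by
  have hb : (0:ℝ) < β := bpos h1
  have hstep := val_step h1 u hu
  have hval : β * val β u = (u 0 : ℝ) + val β (tail 1 u) := by
    rw [hstep]; field_simp
  rw [Tmap, hval, Int.fract_natCast_add, Int.fract_eq_self.mpr]
  constructor
  · exact val_nonneg h1 _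
  · exact val_lt_one h1 h2 _ (tail_bin hu 1) (tail_nf hnf 1) (tail_rich hr 1)

include h2 in
lemma iter_val (u : ℕ → ℕ) (hu : Bin u) (hnf : NF u) (hr : Rich u) (n : ℕ) :
    (Tmap β)^[n] (val β u) = val β (tail n u) := by
  induction n generalizing u with
  | zero =>
    have ht : tail 0 u = u := funext fun i => by simp [tail]
    simp [ht]
  | succ n ih =>
    rw [iterate_succ_apply, Tmap_val h1 h2 u hu hnf hr,
      ih (tail 1 u) (tail_bin hu 1) (tail_nf hnf 1) (tail_rich hr 1), tail_tail,
      add_comm 1 n]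

include h2 in
lemma val_inj (x y : ℕ → ℕ) (hx : Bin x) (hnx : NF x) (hrx : Rich x)
    (hy : Bin y) (hny : NF y) (hry : Rich y) (h : val β x = val β y) : x = y := by
  by_contra hne
  have hex : ∃ n, x n ≠ y n := by
    by_contra hc
    push_neg at hc
    exact hne (funext hc)
  classical
  set n := Nat.find hex with hndef
  have hn : x n ≠ y n := Nat.find_spec hex
  have hagree : ∀ i < n, x i = y i := fun i hi => by
    by_contra hc
    have := Nat.find_min' hex (m := i) hc
    omega
  rcases lt_or_gt_of_ne hn with hlt | hgt
  · exact absurd h (ne_of_lt (lex_val_lt h1 h2 x y hx hnx hrx hy n hagree hlt))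
  · exact absurd h.symm (ne_of_lt (lex_val_lt h1 h2 y x hy hny hry hx n
      (fun i hi => (hagree i hi).symm) hgt))

end tmap

section Zf

/-- The condition for a digit 1 in the word 001(01)^(m-2)001(01)^m repeated. -/
def ZC (m r : ℕ) : Prop :=
  r = 2 ∨ r = 2*m+1 ∨ (4 ≤ r ∧ r + 2 ≤ 2*m ∧ r % 2 = 0) ∨ (2*m+3 ≤ r ∧ r % 2 = 1)

instance (m r : ℕ) : Decidable (ZC m r) := by unfold ZC; infer_instance

def Zf (m : ℕ) : ℕ → ℕ := fun i => if ZC m (i % (4*m+2)) then 1 else 0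

lemma Zf_mod (m i : ℕ) : Zf m i = Zf m (i % (4*m+2)) := by
  have hp : 0 < 4*m+2 := by omega
  simp only [Zf, Nat.mod_eq_of_lt (Nat.mod_lt i hp)]

lemma Zf_lt_eq {m r : ℕ} (h : r < 4*m+2) : Zf m r = if ZC m r then 1 else 0 := by
  simp only [Zf, Nat.mod_eq_of_lt h]

lemma Zf_congr {m i j : ℕ} (h : i % (4*m+2) = j % (4*m+2)) : Zf m i = Zf m j := by
  rw [Zf_mod m i, Zf_mod m j, h]

lemma Zf_per (m i : ℕ) : Zf m (i + (4*m+2)) = Zf m i :=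
  Zf_congr (Nat.add_mod_right i _)

lemma Zf_per_mul (m i t : ℕ) : Zf m (i + t * (4*m+2)) = Zf m i := by
  induction t with
  | zero => simp
  | succ t ih => rw [show i + (t+1) * (4*m+2) = (i + t * (4*m+2)) + (4*m+2) from by ring,
      Zf_per, ih]

lemma Zf_bin (m : ℕ) : Bin (Zf m) := by
  intro i
  simp only [Zf]
  split <;> omega

lemma Zf_one {m r : ℕ} (h : r < 4*m+2) (hc : ZC m r) : Zf m r = 1 := by
  rw [Zf_lt_eq h, if_pos hc]

lemma Zf_zero {m r : ℕ} (h : r < 4*m+2) (hc : ¬ ZC m r) : Zf m r = 0 := by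
  rw [Zf_lt_eq h, if_neg hc]

lemma ZC_of_one {m r : ℕ} (h : r < 4*m+2) (he : Zf m r = 1) : ZC m r := by
  by_contra hc
  rw [Zf_zero h hc] at he
  omega

lemma not_ZC_of_zero {m r : ℕ} (h : r < 4*m+2) (he : Zf m r = 0) : ¬ ZC m r := by
  intro hc
  rw [Zf_one h hc] at he
  omega

lemma Zf_nf (m : ℕ) (hm : 2 ≤ m) : NF (Zf m) := by
  intro i h
  have hp : 0 < 4*m+2 := by omega
  have hr2 : i % (4*m+2) < 4*m+2 := Nat.mod_lt _ hp
  rw [Zf_mod m i] at h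
  have hC : ZC m (i % (4*m+2)) := ZC_of_one hr2 h
  have hstep : (i+1) % (4*m+2) = (i % (4*m+2) + 1) % (4*m+2) := by
    rw [Nat.add_mod, Nat.mod_eq_of_lt (show 1 < 4*m+2 by omega)]
  rw [Zf_mod m (i+1), hstep]
  rcases Nat.lt_or_ge (i % (4*m+2) + 1) (4*m+2) with hlt | hge
  · rw [Nat.mod_eq_of_lt hlt]
    apply Zf_zero hlt
    unfold ZC at hC ⊢
    omega
  · have he : i % (4*m+2) = 4*m+1 := by omega
    rw [he]
    have : (4*m+1+1) % (4*m+2) = 0 := by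
      rw [show 4*m+1+1 = 4*m+2 from by ring, Nat.mod_self]
    rw [this]
    apply Zf_zero (by omega)
    unfold ZC
    omega

lemma Zf_rich (m : ℕ) (hm : 2 ≤ m) : Rich (Zf m) := by
  intro k
  have hkp : k + 1 ≤ (k+1) * (4*m+2) := Nat.le_mul_of_pos_right _ (by omega)
  refine ⟨(k+1) * (4*m+2), by omega, ?_, ?_⟩
  · have : (k+1) * (4*m+2) = 0 + (k+1) * (4*m+2) := by ring
    rw [this, Zf_per_mul]
    apply Zf_zero (by omega)
    unfold ZC; omega
  · have : (k+1) * (4*m+2) + 1 = 1 + (k+1) * (4*m+2) := by ring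
    rw [this, Zf_per_mul]
    apply Zf_zero (by omega)
    unfold ZC; omega

lemma tail_Zf_mod (m k : ℕ) : tail k (Zf m) = tail (k % (4*m+2)) (Zf m) := by
  funext i
  simp only [tail]
  apply Zf_congr
  rw [Nat.add_mod k i, Nat.add_mod (k % (4*m+2)) i, Nat.mod_mod_of_dvd k (dvd_refl _)]

lemma Zf_minrot (m : ℕ) (hm : 2 ≤ m) (k : ℕ) :
    seqLt (Zf m) (tail k (Zf m)) ∨ Zf m = tail k (Zf m) := by
  rw [tail_Zf_mod]
  set r := k % (4*m+2) with hrdef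
  have hr : r < 4*m+2 := Nat.mod_lt _ (by omega)
  rcases Nat.eq_zero_or_pos r with hr0 | hrpos
  · right
    rw [hr0]
    funext i
    simp [tail]
  left
  rcases Nat.lt_or_ge (Zf m r) 1 with hz | ho
  · -- Zf m r = 0
    have hz0 : Zf m r = 0 := by omega
    have hnC : ¬ ZC m r := not_ZC_of_zero hr hz0
    by_cases hcase : r = 2*m-1
    · -- witness 2m
      refine ⟨2*m, fun i hi => ?_, ?_⟩
      · simp only [tail]
        rw [Zf_lt_eq (show i < 4*m+2 by omega), Zf_lt_eq (show r + i < 4*m+2 by omega)]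
        have : ZC m i ↔ ZC m (r+i) := by unfold ZC; omega
        split_ifs with hh1 hh2 hh2 <;> first | rfl | (exfalso; tauto)
      · simp only [tail]
        rw [Zf_zero (show 2*m < 4*m+2 by omega) (by unfold ZC; omega),
          Zf_one (show r + 2*m < 4*m+2 by omega) (by unfold ZC; omega)]
        omega
    · -- then Zf m (r+1) = 1
      have hr1 : r + 1 < 4*m+2 := by
        rcases Nat.lt_or_ge (r+1) (4*m+2) with h | h
        · exact h
        · exfalso
          have : r = 4*m+1 := by omega
          apply hnC
          unfold ZC
          omega
      have hC1 : ZC m (r+1) := by unfold ZC at hnC ⊢; omega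
      refine ⟨1, fun i hi => ?_, ?_⟩
      · have : i = 0 := by omega
        subst this
        simp only [tail]
        rw [Zf_zero (by omega) (by unfold ZC; omega), Zf_zero (show r + 0 < 4*m+2 by omega)
          (by rw [Nat.add_zero]; exact hnC)]
      · simp only [tail]
        rw [Zf_zero (show 1 < 4*m+2 by omega) (by unfold ZC; omega),
          Zf_one (show r + 1 < 4*m+2 by omega) hC1]
        omega
  · -- Zf m r = 1 : witness 0
    refine ⟨0, fun i hi => by omega, ?_⟩
    simp only [tail]
    rw [Zf_zero (show 0 < 4*m+2 by omega) (by unfold ZC; omega), Nat.add_zero]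
    omega

lemma Zf_prim (m : ℕ) (hm : 2 ≤ m) (q : ℕ) (hq : 0 < q)
    (hper : ∀ i, Zf m (i + q) = Zf m i) : 4*m+2 ≤ q := by
  by_contra hc
  push_neg at hc
  have e0 : Zf m q = 0 := by
    have := hper 0
    rw [Nat.zero_add] at this
    rw [this]
    exact Zf_zero (by omega) (by unfold ZC; omega)
  have e1 : Zf m (q+1) = 0 := by
    have := hper 1
    rw [show 1 + q = q + 1 from by ring] at this
    rw [this]
    exact Zf_zero (by omega) (by unfold ZC; omega)
  have hq1 : q + 1 < 4*m+2 := by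
    rcases Nat.lt_or_ge (q+1) (4*m+2) with h | h
    · exact h
    · exfalso
      have : q = 4*m+1 := by omega
      subst this
      rw [Zf_one (by omega) (by unfold ZC; omega)] at e0
      omega
  have hnC0 : ¬ ZC m q := not_ZC_of_zero (by omega) e0
  have hnC1 : ¬ ZC m (q+1) := not_ZC_of_zero hq1 e1
  have hq2m : q = 2*m-1 := by unfold ZC at hnC0 hnC1; omega
  have := hper (2*m)
  rw [hq2m, show 2*m + (2*m-1) = 4*m-1 from by omega] at this
  rw [Zf_one (show 4*m-1 < 4*m+2 by omega) (by unfold ZC; omega),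
    Zf_zero (show 2*m < 4*m+2 by omega) (by unfold ZC; omega)] at this
  omega

end Zf

section word

lemma flatten_replicate_length (k : ℕ) :
    ((List.replicate k ([0,1] : List ℕ)).flatten).length = 2*k := by
  induction k with
  | zero => simp
  | succ k ih =>
    rw [List.replicate_succ, List.flatten_cons, List.length_append, ih]
    simp
    omega

lemma flatten_replicate_getD (k i : ℕ) (h : i < 2*k) :
    ((List.replicate k ([0,1] : List ℕ)).flatten).getD i 0 = i % 2 := by
  induction k generalizing i with
  | zero => omega
  | succ k ih =>
    rw [List.replicate_succ, List.flatten_cons]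
    rcases Nat.lt_or_ge i 2 with h2 | h2
    · rw [List.getD_append _ _ _ _ (by simp; omega)]
      interval_cases i <;> rfl
    · rw [List.getD_append_right _ _ _ _ (by simp; omega)]
      have hlen : ([0,1] : List ℕ).length = 2 := by rfl
      rw [hlen, ih (i-2) (by omega)]
      omega

def Zword (m : ℕ) : List ℕ :=
  [0,0,1] ++ (List.replicate (m - 2) ([0,1] : List ℕ)).flatten ++ [0,0,1] ++
    (List.replicate m ([0,1] : List ℕ)).flatten

lemma Zword_length {m : ℕ} (hm : 2 ≤ m) : (Zword m).length = 4*m+2 := by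
  simp only [Zword, List.length_append, flatten_replicate_length]
  simp
  omega

lemma Zword_getD {m : ℕ} (hm : 2 ≤ m) (r : ℕ) (hr : r < 4*m+2) :
    (Zword m).getD r 0 = Zf m r := by
  have hlen1 : (([0,0,1] : List ℕ) ++ (List.replicate (m - 2) ([0,1] : List ℕ)).flatten).length
      = 2*m-1 := by
    rw [List.length_append, flatten_replicate_length]
    simp
    omega
  have hlen2 : ((([0,0,1] : List ℕ) ++ (List.replicate (m - 2) ([0,1] : List ℕ)).flatten)
      ++ [0,0,1]).length = 2*m+2 := by
    rw [List.length_append, hlen1]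
    simp
    omega
  rcases Nat.lt_or_ge r 3 with h3 | h3
  · rw [Zword, List.getD_append _ _ _ _ (by rw [hlen2]; omega),
      List.getD_append _ _ _ _ (by rw [hlen1]; omega),
      List.getD_append _ _ _ _ (by simp; omega)]
    interval_cases r
    · rw [Zf_zero (by omega) (by unfold ZC; omega)]; rfl
    · rw [Zf_zero (by omega) (by unfold ZC; omega)]; rfl
    · rw [Zf_one (by omega) (by unfold ZC; omega)]; rfl
  rcases Nat.lt_or_ge r (2*m-1) with hA | hA
  · rw [Zword, List.getD_append _ _ _ _ (by rw [hlen2]; omega),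
      List.getD_append _ _ _ _ (by rw [hlen1]; omega),
      List.getD_append_right _ _ _ _ (by simp; omega)]
    have : ([0,0,1] : List ℕ).length = 3 := rfl
    rw [this, flatten_replicate_getD (m-2) (r-3) (by omega)]
    rcases Nat.even_or_odd r with he | ho
    · rw [Zf_one (by omega) (by unfold ZC; rcases he with ⟨t, ht⟩; omega)]
      rcases he with ⟨t, ht⟩
      omega
    · rw [Zf_zero (by omega) (by unfold ZC; rcases ho with ⟨t, ht⟩; omega)]
      rcases ho with ⟨t, ht⟩
      omega
  rcases Nat.lt_or_ge r (2*m+2) with hB | hB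
  · rw [Zword, List.getD_append _ _ _ _ (by rw [hlen2]; omega),
      List.getD_append_right _ _ _ _ (by rw [hlen1]; omega), hlen1]
    have h0 : r - (2*m-1) < 3 := by omega
    have : r = (2*m-1) + (r - (2*m-1)) := by omega
    interval_cases hs : (r - (2*m-1))
    · rw [Zf_zero (by omega) (by unfold ZC; omega)]; rfl
    · rw [Zf_zero (by omega) (by unfold ZC; omega)]; rfl
    · rw [show r = 2*m+1 from by omega, Zf_one (by omega) (by unfold ZC; omega)]; rfl
  · rw [Zword, List.getD_append_right _ _ _ _ (by rw [hlen2]; omega), hlen2,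
      flatten_replicate_getD m (r - (2*m+2)) (by omega)]
    rcases Nat.even_or_odd r with he | ho
    · rw [Zf_zero (by omega) (by unfold ZC; rcases he with ⟨t, ht⟩; omega)]
      rcases he with ⟨t, ht⟩
      omega
    · rw [Zf_one (by omega) (by unfold ZC; rcases ho with ⟨t, ht⟩; omega)]
      rcases ho with ⟨t, ht⟩
      omega

lemma wordSeq_Zword {m : ℕ} (hm : 2 ≤ m) : wordSeq (Zword m) = Zf m := by
  funext i
  rw [wordSeq, Zword_length hm, Zword_getD hm _ (Nat.mod_lt _ (by omega)), ← Zf_mod]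

end word

section comb

lemma per_mul {u : ℕ → ℕ} {P : ℕ} (hper : ∀ i, u (i + P) = u i) (i t : ℕ) :
    u (i + t * P) = u i := by
  induction t with
  | zero => simp
  | succ t ih => rw [show i + (t+1) * P = (i + t * P) + P from by ring, hper, ih]

lemma block_struct {u : ℕ → ℕ} (hb : Bin u) (hnf : NF u)
    (hno : ∀ j, ¬(u j = 0 ∧ u (j+1) = 0 ∧ u (j+2) = 0))
    {j d : ℕ} (hP0 : u j = 0) (hP1 : u (j+1) = 0)
    (hQ0 : u (j+d) = 0) (hQ1 : u (j+d+1) = 0)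
    (hbetween : ∀ e, 0 < e → e < d → ¬(u (j+e) = 0 ∧ u (j+e+1) = 0)) (hd : 0 < d) :
    ∃ g, d = 3 + 2*g ∧ (∀ i, i ≤ g → u (j+2+2*i) = 1) ∧ (∀ i, i ≤ g → u (j+3+2*i) = 0) := by
  have hd3 : 3 ≤ d := by
    rcases (show d = 1 ∨ d = 2 ∨ 3 ≤ d from by omega) with h|h|h
    · exfalso
      apply hno j
      rw [h] at hQ1
      rw [show j+1+1 = j+2 from by ring] at hQ1
      exact ⟨hP0, hP1, hQ1⟩
    · exfalso
      apply hno j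
      rw [h] at hQ0
      exact ⟨hP0, hP1, hQ0⟩
    · exact h
  have A : ∀ i, 2+2*i < d → u (j+2+2*i) = 1 := by
    intro i
    induction i with
    | zero =>
      intro hlt
      have h2 := hb (j+2)
      have h3 := hno j
      rw [show j+2+2*0 = j+2 from by ring]
      by_contra hc
      exact h3 ⟨hP0, hP1, by omega⟩
    | succ i ih =>
      intro hlt
      have h1 : u (j+2+2*i) = 1 := ih (by omega)
      have h2 : u (j+2+2*i+1) = 0 := hnf _ h1
      have hbt := hbetween (3+2*i) (by omega) (by omega)
      rw [show j+(3+2*i) = j+2+2*i+1 from by ring] at hbt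
      rw [show j+2+2*i+1+1 = j+2+2*(i+1) from by ring] at hbt
      have h3 := hb (j+2+2*(i+1))
      omega
  have hodd : d % 2 = 1 := by
    by_contra hev
    have h4 : 4 ≤ d := by omega
    have hi0 : 2 + 2*((d-4)/2) = d - 2 := by omega
    have hA2 := A ((d-4)/2) (by omega)
    have h0 : u (j+2+2*((d-4)/2)+1) = 0 := hnf _ hA2
    have hbt := hbetween (d-1) (by omega) (by omega)
    apply hbt
    constructor
    · rw [show j+(d-1) = j+2+2*((d-4)/2)+1 from by omega]
      exact h0
    · rw [show j+(d-1)+1 = j+d from by omega]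
      exact hQ0
  refine ⟨(d-3)/2, by omega, fun i hi => A i (by omega), fun i hi => ?_⟩
  rcases (show 3+2*i < d ∨ 3+2*i = d from by omega) with h|h
  · have := hnf _ (A i (by omega))
    rw [show j+3+2*i = j+2+2*i+1 from by ring]
    exact this
  · rw [show j+3+2*i = j+d from by omega]
    exact hQ0

lemma comb (m : ℕ) (hm : 2 ≤ m) (u : ℕ → ℕ) (hb : Bin u) (hnf : NF u)
    (hper : ∀ i, u (i + (4*m+2)) = u i)
    (hmin : ∀ q, 0 < q → (∀ i, u (i + q) = u i) → 4*m+2 ≤ q) :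
    ∃ k, seqLt (tail k u) (Zf m) ∨ tail k u = Zf m := by
  -- there is a 00 somewhere
  have h00 : ∃ j, u j = 0 ∧ u (j+1) = 0 := by
    by_contra hc
    push_neg at hc
    have halt : ∀ i, u (i + 2) = u i := by
      intro i
      have b0 := hb i; have b1 := hb (i+1); have b2 := hb (i+1+1)
      have n1 := hnf i; have n2 := hnf (i+1)
      have c1 := hc i; have c2 := hc (i+1)
      rw [show i+2 = i+1+1 from by ring]
      omega
    have := hmin 2 (by omega) halt
    omega
  by_cases h000 : ∃ j, u j = 0 ∧ u (j+1) = 0 ∧ u (j+2) = 0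
  · -- 000 case
    obtain ⟨j, e0, e1, e2⟩ := h000
    refine ⟨j, Or.inl ⟨2, fun i hi => ?_, ?_⟩⟩
    · simp only [tail]
      interval_cases i
      · rw [show j + 0 = j from by ring, e0,
          Zf_zero (show 0 < 4*m+2 from by omega) (by unfold ZC; omega)]
      · rw [e1, Zf_zero (show 1 < 4*m+2 from by omega) (by unfold ZC; omega)]
    · simp only [tail]
      rw [e2, Zf_one (show 2 < 4*m+2 from by omega) (by unfold ZC; omega)]
      omega
  -- no 000
  rw [not_exists] at h000
  have hno : ∀ j, ¬(u j = 0 ∧ u (j+1) = 0 ∧ u (j+2) = 0) := h000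
  -- minimal gap
  set Sgap : Set ℕ := {d | 0 < d ∧ ∃ j, u j = 0 ∧ u (j+1) = 0 ∧ u (j+d) = 0 ∧ u (j+d+1) = 0}
    with hSgap
  have hSne : Sgap.Nonempty := by
    obtain ⟨j, e0, e1⟩ := h00
    refine ⟨4*m+2, by omega, j, e0, e1, ?_, ?_⟩
    · rw [hper j]; exact e0
    · rw [show j + (4*m+2) + 1 = (j+1) + (4*m+2) from by ring, hper (j+1)]; exact e1
  set d := sInf Sgap with hddef
  obtain ⟨hdpos, j0, e00, e01, e10, e11⟩ := Nat.sInf_mem hSne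
  rw [← hddef] at hdpos e10 e11
  have hbetween0 : ∀ e, 0 < e → e < d → ¬(u (j0+e) = 0 ∧ u (j0+e+1) = 0) := by
    intro e he hed hcon
    have hmem : e ∈ Sgap := ⟨he, j0, e00, e01, hcon.1, hcon.2⟩
    have := Nat.sInf_le hmem
    omega
  obtain ⟨g, hdg, hA, hB⟩ := block_struct hb hnf hno e00 e01 e10 e11 hbetween0 hdpos
  have hd42 : d ≤ 4*m+2 := by
    apply Nat.sInf_le
    obtain ⟨j, f0, f1⟩ := h00
    refine ⟨by omega, j, f0, f1, ?_, ?_⟩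
    · rw [hper j]; exact f0
    · rw [show j + (4*m+2) + 1 = (j+1) + (4*m+2) from by ring, hper (j+1)]; exact f1
  have hg : g ≤ 2*m-2 := by
    by_contra hgc
    have hd41 : d = 4*m+1 := by omega
    rw [hd41] at e10 e11
    apply hno (j0+(4*m+1))
    refine ⟨e10, e11, ?_⟩
    rw [show j0+(4*m+1)+2 = (j0+1)+(4*m+2) from by ring, hper (j0+1)]
    exact e01
  -- second gap
  set j1 := j0 + d with hj1
  set Sg1 : Set ℕ := {e | 0 < e ∧ u (j1+e) = 0 ∧ u (j1+e+1) = 0} with hSg1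
  have hS1ne : Sg1.Nonempty := by
    refine ⟨4*m+2-d, by omega, ?_, ?_⟩
    · rw [show j1 + (4*m+2-d) = j0 + (4*m+2) from by omega, hper j0]; exact e00
    · rw [show j1 + (4*m+2-d) + 1 = (j0+1) + (4*m+2) from by omega, hper (j0+1)]; exact e01
  set d1 := sInf Sg1 with hd1def
  obtain ⟨hd1pos, f10, f11⟩ := Nat.sInf_mem hS1ne
  rw [← hd1def] at hd1pos f10 f11
  have hw1 : (4*m+2-d) ∈ Sg1 := by
    refine ⟨by omega, ?_, ?_⟩
    · rw [show j1 + (4*m+2-d) = j0 + (4*m+2) from by omega, hper j0]; exact e00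
    · rw [show j1 + (4*m+2-d) + 1 = (j0+1) + (4*m+2) from by omega, hper (j0+1)]; exact e01
  have hd1le : d1 ≤ 4*m+2-d := Nat.sInf_le hw1
  have hdled1 : d ≤ d1 := Nat.sInf_le ⟨hd1pos, j1, e10, e11, f10, f11⟩
  have hbetween1 : ∀ e, 0 < e → e < d1 → ¬(u (j1+e) = 0 ∧ u (j1+e+1) = 0) := by
    intro e he hed hcon
    have hmem : e ∈ Sg1 := ⟨he, hcon.1, hcon.2⟩
    have := Nat.sInf_le hmem
    omega
  obtain ⟨g1, hdg1, hA1, hB1⟩ := block_struct hb hnf hno e10 e11 f10 f11 hbetween1 hd1pos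
  have hsum : d + d1 ≤ 4*m+2 := by omega
  have hgg1 : g ≤ g1 := by omega
  rcases (show g + 3 ≤ m ∨ g + 2 = m ∨ m ≤ g + 1 from by omega) with hc1 | hc2 | hc3
  · -- case 1 : strictly small first gap
    refine ⟨j0, Or.inl ⟨4+2*g, fun i hi => ?_, ?_⟩⟩
    · simp only [tail]
      rcases Nat.lt_or_ge i 2 with h2 | h2
      · interval_cases i
        · rw [show j0 + 0 = j0 from by ring, e00,
            Zf_zero (show 0 < 4*m+2 from by omega) (by unfold ZC; omega)]
        · rw [e01, Zf_zero (show 1 < 4*m+2 from by omega) (by unfold ZC; omega)]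
      · rcases Nat.even_or_odd i with ⟨t, ht⟩ | ⟨t, ht⟩
        · rw [show j0 + i = j0+2+2*(t-1) from by omega, hA (t-1) (by omega),
            Zf_one (show i < 4*m+2 from by omega) (by unfold ZC; omega)]
        · rw [show j0 + i = j0+3+2*(t-1) from by omega, hB (t-1) (by omega),
            Zf_zero (show i < 4*m+2 from by omega) (by unfold ZC; omega)]
    · simp only [tail]
      rw [show j0+(4+2*g) = j1+1 from by omega, e11,
        Zf_one (show 4+2*g < 4*m+2 from by omega) (by unfold ZC; omega)]
      omega
  · -- case 2 : g + 2 = m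
    have hagree1 : ∀ i, i < d → u (j0 + i) = Zf m i := by
      intro i hi
      rcases Nat.lt_or_ge i 2 with h2 | h2
      · interval_cases i
        · rw [show j0 + 0 = j0 from by ring, e00,
            Zf_zero (show 0 < 4*m+2 from by omega) (by unfold ZC; omega)]
        · rw [e01, Zf_zero (show 1 < 4*m+2 from by omega) (by unfold ZC; omega)]
      · rcases Nat.even_or_odd i with ⟨t, ht⟩ | ⟨t, ht⟩
        · rw [show j0 + i = j0+2+2*(t-1) from by omega, hA (t-1) (by omega),
            Zf_one (show i < 4*m+2 from by omega) (by unfold ZC; omega)]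
        · rw [show j0 + i = j0+3+2*(t-1) from by omega, hB (t-1) (by omega),
            Zf_zero (show i < 4*m+2 from by omega) (by unfold ZC; omega)]
    have hagree2 : ∀ i, d ≤ i → i ≤ d + d1 → i < 4*m+2 → u (j0 + i) = Zf m i := by
      intro i hge hle hlt
      rcases Nat.lt_or_ge (i - d) 2 with h2 | h2
      · rcases (show i = d ∨ i = d + 1 from by omega) with he | he
        · rw [show j0 + i = j1 from by omega, e10,
            Zf_zero (by omega) (by unfold ZC; omega)]
        · rw [show j0 + i = j1+1 from by omega, e11,
            Zf_zero (by omega) (by unfold ZC; omega)]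
      · rcases Nat.even_or_odd (i - d) with ⟨t, ht⟩ | ⟨t, ht⟩
        · rw [show j0 + i = j1+2+2*(t-1) from by omega, hA1 (t-1) (by omega),
            Zf_one (by omega) (by unfold ZC; omega)]
        · rw [show j0 + i = j1+3+2*(t-1) from by omega, hB1 (t-1) (by omega),
            Zf_zero (by omega) (by unfold ZC; omega)]
    rcases Nat.lt_or_ge g1 m with hg1m | hg1m
    · -- case 2a
      refine ⟨j0, Or.inl ⟨d + d1 + 1, fun i hi => ?_, ?_⟩⟩
      · simp only [tail]
        rcases Nat.lt_or_ge i d with h | h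
        · exact hagree1 i h
        · exact hagree2 i h (by omega) (by omega)
      · simp only [tail]
        rw [show j0 + (d + d1 + 1) = j1 + d1 + 1 from by omega, f11,
          Zf_one (by omega) (by unfold ZC; omega)]
        omega
    · -- case 2b : equality
      have h2b : d1 = 2*m+3 := by omega
      refine ⟨j0, Or.inr ?_⟩
      funext i
      simp only [tail]
      have hcore : ∀ r, r < 4*m+2 → u (j0 + r) = Zf m r := by
        intro r hr
        rcases Nat.lt_or_ge r d with h | h
        · exact hagree1 r h
        · exact hagree2 r h (by omega) hr
      obtain ⟨q, r, hr, hi⟩ : ∃ q r, r < 4*m+2 ∧ i = r + q * (4*m+2) :=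
        ⟨i / (4*m+2), i % (4*m+2), Nat.mod_lt _ (by omega),
          (Nat.mod_add_div' i (4*m+2)).symm⟩
      rw [hi, show j0 + (r + q * (4*m+2)) = (j0 + r) + q*(4*m+2) from by ring,
        per_mul hper, Zf_per_mul, hcore r hr]
  · -- case 3 : both gaps equal m-1, contradiction with minimality
    exfalso
    have hge : g = m-1 := by omega
    have hge1 : g1 = m-1 := by omega
    have hd21 : d = 2*m+1 := by omega
    have hd121 : d1 = 2*m+1 := by omega
    have hAl : ∀ o, o < 2*m+1 → u (j0 + o + (2*m+1)) = u (j0 + o) := by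
      intro o ho
      rcases Nat.lt_or_ge o 2 with h2 | h2
      · interval_cases o
        · rw [show j0 + 0 + (2*m+1) = j1 from by omega, show j0 + 0 = j0 from by ring,
            e10, e00]
        · rw [show j0 + 1 + (2*m+1) = j1+1 from by omega, e11, e01]
      · rcases Nat.even_or_odd o with ⟨t, ht⟩ | ⟨t, ht⟩
        · rw [show j0 + o + (2*m+1) = j1+2+2*(t-1) from by omega,
            show j0 + o = j0+2+2*(t-1) from by omega, hA1 (t-1) (by omega),
            hA (t-1) (by omega)]
        · rw [show j0 + o + (2*m+1) = j1+3+2*(t-1) from by omega,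
            show j0 + o = j0+3+2*(t-1) from by omega, hB1 (t-1) (by omega),
            hB (t-1) (by omega)]
    have hBl : ∀ o, o < 4*m+2 → u (j0 + o + (2*m+1)) = u (j0 + o) := by
      intro o ho
      rcases Nat.lt_or_ge o (2*m+1) with h | h
      · exact hAl o h
      · have h1 := hAl (o - (2*m+1)) (by omega)
        rw [show j0 + o + (2*m+1) = (j0 + (o - (2*m+1))) + (4*m+2) from by omega, hper]
        rw [show j0 + (o - (2*m+1)) + (2*m+1) = j0 + o from by omega] at h1
        exact h1.symm
    have hCl : ∀ i, u (i + (2*m+1)) = u i := by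
      intro i
      have hj0le : j0 ≤ j0 * (4*m+2) := Nat.le_mul_of_pos_right _ (by omega)
      set x := i + j0 * (4*m+2) - j0 with hx
      have k1 : u (i + (2*m+1)) = u (j0 + x + (2*m+1)) := by
        rw [show j0 + x + (2*m+1) = (i + (2*m+1)) + j0 * (4*m+2) from by omega,
          per_mul hper]
      have k2 : u i = u (j0 + x) := by
        rw [show j0 + x = i + j0 * (4*m+2) from by omega, per_mul hper]
      obtain ⟨q, r, hr, hxd⟩ : ∃ q r, r < 4*m+2 ∧ x = r + q * (4*m+2) :=
        ⟨x / (4*m+2), x % (4*m+2), Nat.mod_lt _ (by omega),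
          (Nat.mod_add_div' x (4*m+2)).symm⟩
      have k3 : u (j0 + x + (2*m+1)) = u (j0 + r + (2*m+1)) := by
        rw [show j0 + x + (2*m+1) = (j0 + r + (2*m+1)) + q * (4*m+2) from by omega,
          per_mul hper]
      have k4 : u (j0 + x) = u (j0 + r) := by
        rw [show j0 + x = (j0 + r) + q * (4*m+2) from by omega, per_mul hper]
      rw [k1, k3, hBl r hr, ← k4, ← k2]
    have := hmin (2*m+1) (by omega) hCl
    omega

end comb

end GoldenAux

open GoldenAux in
theorem stmt7 (β : ℝ) (hβ : β = (1 + Real.sqrt 5) / 2) (m : ℕ) (hm : 2 ≤ m) :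
    S β (4 * m + 2) = val β (wordSeq ([0,0,1] ++ (List.replicate (m - 2) ([0,1] : List ℕ)).flatten ++ [0,0,1] ++ (List.replicate m ([0,1] : List ℕ)).flatten)) := by
  obtain ⟨h1, h2', hgold⟩ := beta_facts hβ
  have hword : ([0,0,1] ++ (List.replicate (m - 2) ([0,1] : List ℕ)).flatten ++ [0,0,1] ++
      (List.replicate m ([0,1] : List ℕ)).flatten) = Zword m := rfl
  rw [hword, wordSeq_Zword hm]
  have hbin : Bin (Zf m) := Zf_bin m
  have hnf : NF (Zf m) := Zf_nf m hm
  have hrich : Rich (Zf m) := Zf_rich m hm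
  have ht0 : 0 ≤ val β (Zf m) := val_nonneg h1 _
  have ht1 : val β (Zf m) < 1 := val_lt_one h1 hgold _ hbin hnf hrich
  have htail42 : tail (4*m+2) (Zf m) = Zf m := by
    funext i
    simp only [tail]
    rw [add_comm]
    exact Zf_per m i
  have hiter : ∀ n : ℕ, (Tmap β)^[n] (val β (Zf m)) = val β (tail n (Zf m)) :=
    iter_val h1 hgold _ hbin hnf hrich
  apply IsGreatest.csSup_eq
  constructor
  · -- membership
    refine ⟨⟨ht0, ht1⟩, val β (Zf m), ⟨⟨ht0, ht1⟩, fun n => ?_⟩, ?_⟩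
    · rw [hiter n]
      exact val_mono_seqLe h1 hgold _ _ hbin hnf hrich (tail_bin hbin n) (Zf_minrot m hm n)
    · -- minimal period
      have hpp : IsPeriodicPt (Tmap β) (4*m+2) (val β (Zf m)) := by
        show (Tmap β)^[4*m+2] (val β (Zf m)) = val β (Zf m)
        rw [hiter, htail42]
      have hle : Function.minimalPeriod (Tmap β) (val β (Zf m)) ≤ 4*m+2 :=
        hpp.minimalPeriod_le (by omega)
      have hq : (Tmap β)^[Function.minimalPeriod (Tmap β) (val β (Zf m))] (val β (Zf m))
          = val β (Zf m) := Function.iterate_minimalPeriod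
      set q := Function.minimalPeriod (Tmap β) (val β (Zf m)) with hqdef
      have hqpos : 0 < q := hpp.minimalPeriod_pos (by omega)
      rw [hiter q] at hq
      have htq : tail q (Zf m) = Zf m :=
        val_inj h1 hgold _ _ (tail_bin hbin q) (tail_nf hnf q) (tail_rich hrich q)
          hbin hnf hrich hq
      have hprim := Zf_prim m hm q hqpos (fun i => by
        have := congrFun htq i
        simp only [tail] at this
        rw [add_comm]
        exact this)
      show q = 4*m+2
      omega
  · -- upper bound
    rintro t ⟨⟨ht0', ht1'⟩, x, hxK, hxmin⟩
    obtain ⟨hx01, hK⟩ := hxK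
    have hub : Bin (digits β x) := digits_bin h1 hgold hx01
    have hunf : NF (digits β x) := digits_nf h1 hgold hx01
    have hperiod : (Tmap β)^[4*m+2] x = x := by
      rw [← hxmin]
      exact Function.iterate_minimalPeriod
    have huper : ∀ i, digits β x (i + (4*m+2)) = digits β x i := by
      intro i
      simp only [digits]
      rw [iterate_add_apply, hperiod]
    have hval_iter : ∀ k : ℕ, (Tmap β)^[k] x = val β (tail k (digits β x)) := by
      intro k
      rw [tail_digits h1, val_digits h1 hgold (iter_mem hx01 k)]
    have humin : ∀ q, 0 < q → (∀ i, digits β x (i + q) = digits β x i) → 4*m+2 ≤ q := by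
      intro q hq hqper
      have hTq : (Tmap β)^[q] x = x := by
        rw [hval_iter q]
        have htq : tail q (digits β x) = digits β x := funext fun i => by
          simp only [tail]
          rw [add_comm]
          exact hqper i
        rw [htq]
        exact val_digits h1 hgold hx01
      have := Function.IsPeriodicPt.minimalPeriod_le hq hTq
      rw [hxmin] at this
      exact this
    have hrich_u : Rich (digits β x) := by
      have h00 : ∃ j, digits β x j = 0 ∧ digits β x (j+1) = 0 := by
        by_contra hc
        push_neg at hc
        have halt : ∀ i, digits β x (i + 2) = digits β x i := by
          intro i
          have b0 := hub i; have b1 := hub (i+1); have b2 := hub (i+1+1)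
          have n1 := hunf i; have n2 := hunf (i+1)
          have c1 := hc i; have c2 := hc (i+1)
          rw [show i+2 = i+1+1 from by ring]
          omega
        have := humin 2 (by omega) halt
        omega
      obtain ⟨j, e0, e1⟩ := h00
      intro k
      refine ⟨j + k * (4*m+2), ?_, ?_, ?_⟩
      · have : k ≤ k * (4*m+2) := Nat.le_mul_of_pos_right _ (by omega)
        omega
      · rw [per_mul huper]
        exact e0
      · rw [show j + k * (4*m+2) + 1 = (j+1) + k * (4*m+2) from by ring, per_mul huper]
        exact e1
    obtain ⟨k, hk⟩ := comb m hm (digits β x) hub hunf huper humin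
    calc t ≤ (Tmap β)^[k] x := hK k
      _ = val β (tail k (digits β x)) := hval_iter k
      _ ≤ val β (Zf m) :=
        val_mono_seqLe h1 hgold _ _ (tail_bin hub k) (tail_nf hunf k)
          (tail_rich hrich_u k) hbin hk
end
end

section
/- For β = (1+√5)/2 and any integer m ≥ 1, S_β(4m+4) = [(001(01)^{m-1}001(01)^m)^∞]_β. -/
open Function Filter

noncomputable section

def Bin (a : ℕ → ℕ) : Prop := ∀ i, a i ≤ 1

lemma shift_iter (a : ℕ → ℕ) (k i : ℕ) : (shift^[k] a) i = a (i + k) := by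
  induction k generalizing a i with
  | zero => rfl
  | succ k ih =>
    rw [Function.iterate_succ_apply, ih]
    simp [shift, Nat.add_assoc, Nat.add_comm 1 k]

section Beta
variable {β : ℝ} (hβ1 : 1 < β)

include hβ1 in
lemma summable_val {a : ℕ → ℕ} (ha : Bin a) :
    Summable (fun i => (a i : ℝ) / β ^ (i + 1)) := by
  have hβ0 : (0:ℝ) < β := lt_trans one_pos hβ1
  have hsum : Summable (fun i : ℕ => (β⁻¹) ^ i) :=
    summable_geometric_of_lt_one (by positivity) (by rw [inv_lt_one_iff₀]; right; exact hβ1)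
  have hsum2 : Summable (fun i : ℕ => (β⁻¹) ^ (i+1)) := by
    have := hsum.mul_left β⁻¹
    exact this.congr (fun i => by rw [pow_succ, mul_comm])
  apply Summable.of_nonneg_of_le _ _ hsum2
  · intro i; positivity
  · intro i
    rw [inv_pow, inv_eq_one_div, div_le_div_iff₀ (by positivity) (by positivity)]
    have : (a i : ℝ) ≤ 1 := by exact_mod_cast ha i
    nlinarith [pow_pos hβ0 (i+1)]

include hβ1 in
lemma val_nonneg {a : ℕ → ℕ} : 0 ≤ val β a := by
  apply tsum_nonneg
  intro i
  have hβ0 : (0:ℝ) < β := lt_trans one_pos hβ1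
  positivity

include hβ1 in
lemma val_shift_eq {a : ℕ → ℕ} (ha : Bin a) :
    val β a = (a 0 : ℝ) / β + val β (shift a) / β := by
  have hβ0 : (0:ℝ) < β := lt_trans one_pos hβ1
  have hs := summable_val hβ1 ha
  rw [val, Summable.tsum_eq_zero_add hs]
  have h2 : ∀ i : ℕ, ((a (i+1) : ℝ)) / β ^ (i + 1 + 1) = ((shift a i : ℝ) / β ^ (i+1)) * (1/β) := by
    intro i
    show ((a (i+1) : ℝ)) / β ^ (i + 1 + 1) = ((a (i+1) : ℝ) / β ^ (i+1)) * (1/β)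
    rw [pow_succ]
    field_simp
  rw [tsum_congr h2, tsum_mul_right, val]
  rw [pow_one]
  field_simp

include hβ1 in
lemma val_split {a : ℕ → ℕ} (ha : Bin a) (N : ℕ) :
    val β a = (∑ i ∈ Finset.range N, (a i : ℝ) / β ^ (i+1)) + val β (shift^[N] a) / β ^ N := by
  induction N with
  | zero => simp
  | succ N ih =>
    have hb : Bin (shift^[N] a) := by intro i; rw [shift_iter]; exact ha _
    rw [ih, Finset.sum_range_succ, val_shift_eq hβ1 hb]
    have hβ0 : (0:ℝ) < β := lt_trans one_pos hβ1
    have h1 : (shift^[N] a) 0 = a N := by rw [shift_iter]; ring_nf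
    have h2 : shift (shift^[N] a) = shift^[N+1] a := by
      funext i
      show (shift^[N] a) (i+1) = _
      rw [shift_iter, shift_iter]
      ring_nf
    rw [h1, h2]
    have hβN : β ^ N ≠ 0 := by positivity
    have hβN1 : β ^ (N+1) ≠ 0 := by positivity
    field_simp
    ring

def No11 (a : ℕ → ℕ) : Prop := ∀ i, a i = 1 → a (i + 1) = 0
def Rec00 (a : ℕ → ℕ) : Prop := ∀ k, ∃ j, a (k + j) = 0 ∧ a (k + j + 1) = 0

lemma Bin.shift {a : ℕ → ℕ} (ha : Bin a) (k : ℕ) : Bin (shift^[k] a) := by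
  intro i; rw [shift_iter]; exact ha _

lemma No11.shift {a : ℕ → ℕ} (ha : No11 a) (k : ℕ) : No11 (shift^[k] a) := by
  intro i h
  rw [shift_iter] at h ⊢
  have := ha _ h
  convert this using 2
  omega

lemma Rec00.shift {a : ℕ → ℕ} (ha : Rec00 a) (k : ℕ) : Rec00 (shift^[k] a) := by
  intro j
  obtain ⟨i, h1, h2⟩ := ha (j + k)
  refine ⟨i, ?_, ?_⟩ <;> rw [shift_iter] <;> [skip; skip] <;>
    first
      | (convert h1 using 2; omega)
      | (convert h2 using 2; omega)

include hβ1 in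
lemma psum_succ (a : ℕ → ℕ) (N : ℕ) :
    ∑ i ∈ Finset.range (N+1), (a i : ℝ) / β ^ (i+1)
      = (a 0 : ℝ) / β + (1/β) * ∑ i ∈ Finset.range N, (shift a i : ℝ) / β ^ (i+1) := by
  have hβ0 : (0:ℝ) < β := lt_trans one_pos hβ1
  rw [Finset.sum_range_succ']
  rw [Finset.mul_sum]
  have : ∀ i ∈ Finset.range N, (a (i+1) : ℝ) / β ^ (i+1+1) = 1/β * ((shift a i : ℝ) / β ^ (i+1)) := by
    intro i _
    show (a (i+1) : ℝ) / β ^ (i+1+1) = 1/β * ((a (i+1) : ℝ) / β ^ (i+1))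
    rw [pow_succ]
    have hβ0' : β ≠ 0 := ne_of_gt hβ0
    rw [div_mul_eq_div_div, one_div, inv_mul_eq_div, div_div]
  rw [Finset.sum_congr rfl this]
  rw [pow_one]
  ring

variable (hβ2 : β^2 = β + 1)

include hβ1 hβ2 in
lemma beta_id : 1/β + 1/β^2 = 1 := by
  have hβ0 : (0:ℝ) < β := lt_trans one_pos hβ1
  field_simp
  nlinarith

include hβ1 hβ2 in
lemma partial_le : ∀ N : ℕ, ∀ a : ℕ → ℕ, Bin a → No11 a →
    ∑ i ∈ Finset.range N, (a i : ℝ) / β ^ (i+1) ≤ 1 - (1/β) ^ (N+1) := by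
  have hβ0 : (0:ℝ) < β := lt_trans one_pos hβ1
  have hb1 : 1/β < 1 := by rw [div_lt_one hβ0]; exact hβ1
  have hbnn : (0:ℝ) ≤ 1/β := by positivity
  intro N
  induction N using Nat.strong_induction_on with
  | _ N IH =>
    intro a ha h11
    match N with
    | 0 =>
      simp only [Finset.range_zero, Finset.sum_empty]
      have : (1/β)^(0+1) ≤ 1 := pow_le_one₀ hbnn hb1.le
      linarith
    | 1 =>
      simp only [Finset.sum_range_one]
      have h1 : (a 0 : ℝ) ≤ 1 := by exact_mod_cast ha 0
      have key : (1:ℝ) - (1/β)^2 = 1/β := by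
        have := beta_id hβ1 hβ2
        field_simp at this ⊢
        nlinarith
      rw [pow_one, key, div_le_div_iff₀ hβ0 hβ0]
      nlinarith
    | (N+1) =>
      rw [psum_succ hβ1]
      rcases Nat.lt_or_ge (a 0) 1 with h0 | h0
      · have h0 : a 0 = 0 := by omega
        rw [h0]
        have hP := IH N (by omega) (shift a) (fun i => ha (i+1)) (fun i h => h11 (i+1) h)
        push_cast
        calc (0:ℝ)/β + 1/β * ∑ i ∈ Finset.range N, ((shift a) i : ℝ)/β^(i+1)
            ≤ (0:ℝ)/β + 1/β * (1 - (1/β)^(N+1)) :=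
              add_le_add le_rfl (mul_le_mul_of_nonneg_left hP hbnn)
          _ = 1/β - (1/β)^(N+1+1) := by ring
          _ ≤ 1 - (1/β)^(N+1+1) := by linarith
      · have h0 : a 0 = 1 := le_antisymm (ha 0) h0
        have h1 : a 1 = 0 := h11 0 h0
        rw [h0]
        match N with
        | 0 =>
          simp only [Finset.range_zero, Finset.sum_empty, mul_zero, add_zero]
          have key : (1:ℝ) - (1/β)^(0+1+1) = 1/β := by
            have h := beta_id hβ1 hβ2
            have h2 : ((1:ℝ)/β)^(0+1+1) = 1/β^2 := by
              rw [div_pow, one_pow]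
            rw [h2]
            linarith
          rw [key]
          norm_num
        | (N+1) =>
          rw [psum_succ hβ1]
          have hsh1 : (shift a) 0 = 0 := h1
          rw [hsh1]
          have hP := IH N (by omega) (shift (shift a)) (fun i => ha (i+2)) (fun i h => h11 (i+2) h)
          have step : ∑ i ∈ Finset.range N, ((shift (shift a)) i : ℝ)/β^(i+1) ≤ 1 - (1/β)^(N+1) := hP
          have hβi := beta_id hβ1 hβ2
          push_cast
          calc (1:ℝ)/β + 1/β * ((0:ℝ)/β + 1/β * ∑ i ∈ Finset.range N, ((shift (shift a)) i : ℝ)/β^(i+1))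
              ≤ 1/β + 1/β * (0/β + 1/β * (1 - (1/β)^(N+1))) := by
                apply add_le_add le_rfl
                apply mul_le_mul_of_nonneg_left _ hbnn
                apply add_le_add le_rfl
                exact mul_le_mul_of_nonneg_left step hbnn
            _ = 1/β + 1/β^2 - (1/β)^(N+3) := by
                simp only [div_pow, one_pow]
                field_simp
                ring
            _ = 1 - (1/β)^(N+3) := by rw [hβi]

include hβ1 hβ2 in
lemma val_le_one {a : ℕ → ℕ} (ha : Bin a) (h11 : No11 a) : val β a ≤ 1 := by
  have hβ0 : (0:ℝ) < β := lt_trans one_pos hβ1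
  have hb1 : 1/β < 1 := by rw [div_lt_one hβ0]; exact hβ1
  have hbnn : (0:ℝ) ≤ 1/β := by positivity
  have htend := (summable_val hβ1 ha).hasSum.tendsto_sum_nat
  refine le_of_tendsto htend (Filter.Eventually.of_forall (fun N => ?_))
  calc ∑ i ∈ Finset.range N, (a i : ℝ)/β^(i+1) ≤ 1 - (1/β)^(N+1) := partial_le hβ1 hβ2 N a ha h11
    _ ≤ 1 := by
        have : (0:ℝ) ≤ (1/β)^(N+1) := by positivity
        linarith

include hβ1 hβ2 in
lemma val_lt_one {a : ℕ → ℕ} (ha : Bin a) (h11 : No11 a) {j : ℕ}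
    (h0 : a j = 0) (h0' : a (j+1) = 0) : val β a < 1 := by
  have hβ0 : (0:ℝ) < β := lt_trans one_pos hβ1
  have hsplit := val_split hβ1 ha j
  have hP := partial_le hβ1 hβ2 j a ha h11
  have htail : val β (shift^[j] a) ≤ 1/β^2 := by
    have hb : Bin (shift^[j] a) := ha.shift j
    have h1 : (shift^[j] a) 0 = 0 := by rw [shift_iter]; simpa using h0
    have h2 : (shift^[j] a) 1 = 0 := by rw [shift_iter]; simpa [Nat.add_comm] using h0'
    rw [val_shift_eq hβ1 hb, h1]
    have hb2 : Bin (shift (shift^[j] a)) := fun i => by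
      show (shift^[j] a) (i+1) ≤ 1
      exact hb (i+1)
    rw [val_shift_eq hβ1 hb2]
    have h2' : (shift (shift^[j] a)) 0 = 0 := h2
    rw [h2']
    have h3 : val β (shift (shift (shift^[j] a))) ≤ 1 := by
      have e : shift (shift (shift^[j] a)) = shift^[j+2] a := by
        funext i
        show (shift^[j] a) (i+1+1) = _
        rw [shift_iter, shift_iter]
        ring_nf
      rw [e]
      exact val_le_one hβ1 hβ2 (ha.shift _) (h11.shift _)
    simp only [Nat.cast_zero, zero_div, zero_add]
    have e : (1:ℝ)/β^2 = 1/β/β := by rw [div_div, sq]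
    rw [e]
    gcongr
  have hpow : (0:ℝ) < (1/β)^(j+1) := by positivity
  have hpow2 : ((1:ℝ)/β)^(j+1) = 1/β^(j+1) := by rw [div_pow, one_pow]
  have hβj : (0:ℝ) < β^j := by positivity
  calc val β a = (∑ i ∈ Finset.range j, (a i : ℝ)/β^(i+1)) + val β (shift^[j] a)/β^j := hsplit
    _ ≤ (1 - (1/β)^(j+1)) + (1/β^2)/β^j := by
        apply add_le_add hP
        gcongr
    _ < 1 := by
        rw [hpow2]
        rw [div_div]
        have e1 : β^(j+1) = β^j * β := by rw [pow_succ]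
        have e2 : β^2 * β^j = β^j * β * β := by ring
        rw [e1, e2]
        have hβjβ : (0:ℝ) < β^j * β := by positivity
        have h5 : 1/(β^j*β*β) < 1/(β^j*β) := by
          apply one_div_lt_one_div_of_lt hβjβ
          nlinarith
        linarith

include hβ1 in
lemma val_diff {a b : ℕ → ℕ} (ha : Bin a) (hb : Bin b) {n : ℕ} (heq : ∀ i < n, a i = b i) :
    val β b - val β a = (((b n : ℝ) - a n) + (val β (shift^[n+1] b) - val β (shift^[n+1] a))) / β^(n+1) := by
  have hβ0 : (0:ℝ) < β := lt_trans one_pos hβ1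
  rw [val_split hβ1 ha (n+1), val_split hβ1 hb (n+1)]
  rw [Finset.sum_range_succ, Finset.sum_range_succ]
  have hs : ∑ i ∈ Finset.range n, (a i : ℝ)/β^(i+1) = ∑ i ∈ Finset.range n, (b i : ℝ)/β^(i+1) := by
    apply Finset.sum_congr rfl
    intro i hi
    rw [heq i (Finset.mem_range.mp hi)]
  rw [hs]
  have hβn : (β:ℝ)^(n+1) ≠ 0 := by positivity
  field_simp
  ring

include hβ1 hβ2 in
lemma val_le_val {a b : ℕ → ℕ} (ha : Bin a) (h11a : No11 a) (hb : Bin b) (h11b : No11 b)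
    (hle : seqLe a b) : val β a ≤ val β b := by
  rcases hle with ⟨n, heq, hlt⟩ | rfl
  · have hβ0 : (0:ℝ) < β := lt_trans one_pos hβ1
    have hd := val_diff hβ1 ha hb heq
    have h1 : (1:ℝ) ≤ (b n : ℝ) - (a n : ℝ) := by
      have := hb n
      have := ha n
      have : a n = 0 ∧ b n = 1 := by omega
      rw [this.1, this.2]; norm_num
    have h2 : val β (shift^[n+1] b) ≥ 0 := val_nonneg hβ1
    have h3 : val β (shift^[n+1] a) ≤ 1 := val_le_one hβ1 hβ2 (ha.shift _) (h11a.shift _)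
    have hpos : (0:ℝ) < β^(n+1) := by positivity
    have hD : (0:ℝ) ≤ ((b n : ℝ) - (a n) + (val β (shift^[n+1] b) - val β (shift^[n+1] a))) := by
      linarith
    have := div_nonneg hD hpos.le
    linarith
  · exact le_rfl

include hβ1 hβ2 in
lemma val_lt_val {a b : ℕ → ℕ} (ha : Bin a) (h11a : No11 a) (hrec : Rec00 a)
    (hb : Bin b) (h11b : No11 b) (hlt : seqLt a b) : val β a < val β b := by
  obtain ⟨n, heq, hl⟩ := hlt
  have hβ0 : (0:ℝ) < β := lt_trans one_pos hβ1
  have hd := val_diff hβ1 ha hb heq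
  have h1 : (1:ℝ) ≤ (b n : ℝ) - (a n : ℝ) := by
    have := hb n
    have := ha n
    have : a n = 0 ∧ b n = 1 := by omega
    rw [this.1, this.2]; norm_num
  have h2 : val β (shift^[n+1] b) ≥ 0 := val_nonneg hβ1
  have h3 : val β (shift^[n+1] a) < 1 := by
    obtain ⟨j, hj0, hj1⟩ := hrec (n+1)
    apply val_lt_one hβ1 hβ2 (ha.shift _) (h11a.shift _) (j := j)
    · rw [shift_iter]; rw [Nat.add_comm] at hj0; exact hj0
    · rw [shift_iter]
      have : j + 1 + (n+1) = n + 1 + j + 1 := by omega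
      rw [this]; exact hj1
  have hpos : (0:ℝ) < β^(n+1) := by positivity
  have hD : (0:ℝ) < ((b n : ℝ) - (a n) + (val β (shift^[n+1] b) - val β (shift^[n+1] a))) := by
    linarith
  have := div_pos hD hpos
  linarith

lemma seq_trichot (a b : ℕ → ℕ) : seqLt a b ∨ a = b ∨ seqLt b a := by
  by_cases h : a = b
  · exact Or.inr (Or.inl h)
  · have hne : ∃ n, a n ≠ b n := by
      by_contra hc
      push_neg at hc
      exact h (funext hc)
    classical
    let n := Nat.find hne
    have hn : a n ≠ b n := Nat.find_spec hne
    have hmin : ∀ i < n, a i = b i := fun i hi => by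
      have := Nat.find_min hne hi
      exact not_ne_iff.mp this
    rcases Nat.lt_or_ge (a n) (b n) with hl | hg
    · exact Or.inl ⟨n, hmin, hl⟩
    · have : b n < a n := by omega
      exact Or.inr (Or.inr ⟨n, fun i hi => (hmin i hi).symm, this⟩)

include hβ1 hβ2 in
lemma val_inj {a b : ℕ → ℕ} (ha : Bin a) (h11a : No11 a) (hreca : Rec00 a)
    (hb : Bin b) (h11b : No11 b) (hrecb : Rec00 b) (h : val β a = val β b) : a = b := by
  rcases seq_trichot a b with hl | he | hg
  · exact absurd h (ne_of_lt (val_lt_val hβ1 hβ2 ha h11a hreca hb h11b hl))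
  · exact he
  · exact absurd h.symm (ne_of_lt (val_lt_val hβ1 hβ2 hb h11b hrecb ha h11a hg))

include hβ1 hβ2 in
lemma Tmap_val {a : ℕ → ℕ} (ha : Bin a) (h11 : No11 a) (hrec : Rec00 a) :
    Tmap β (val β a) = val β (shift a) := by
  have hβ0 : (0:ℝ) < β := lt_trans one_pos hβ1
  have hsh : val β a = (a 0 : ℝ)/β + val β (shift a)/β := val_shift_eq hβ1 ha
  have hmul : β * val β a = (a 0 : ℝ) + val β (shift a) := by
    rw [hsh]
    field_simp
  rw [Tmap, hmul]
  have hb : Bin (shift a) := fun i => ha (i+1)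
  have h11' : No11 (shift a) := fun i h => h11 (i+1) h
  have hrec' : Rec00 (shift a) := by
    intro k
    obtain ⟨j, hj0, hj1⟩ := hrec (k+1)
    exact ⟨j, by show a (k + j + 1) = 0; convert hj0 using 2; omega,
             by show a (k + j + 1 + 1) = 0; convert hj1 using 2; omega⟩
  have hv0 : 0 ≤ val β (shift a) := val_nonneg hβ1
  have hv1 : val β (shift a) < 1 := by
    obtain ⟨j, hj0, hj1⟩ := hrec' 0
    exact val_lt_one hβ1 hβ2 hb h11' (j := j) (by simpa using hj0) (by simpa using hj1)
  rw [show ((a 0 : ℝ)) = ((a 0 : ℤ) : ℝ) by push_cast; ring]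
  rw [Int.fract_intCast_add]
  exact Int.fract_eq_self.mpr ⟨hv0, hv1⟩

include hβ1 hβ2 in
lemma Tmap_iter_val {a : ℕ → ℕ} (ha : Bin a) (h11 : No11 a) (hrec : Rec00 a) (k : ℕ) :
    (Tmap β)^[k] (val β a) = val β (shift^[k] a) := by
  induction k generalizing a with
  | zero => rfl
  | succ k ih =>
    rw [Function.iterate_succ_apply, Function.iterate_succ_apply]
    rw [Tmap_val hβ1 hβ2 ha h11 hrec]
    exact ih (fun i => ha (i+1)) (fun i h => h11 (i+1) h) (by
      intro j
      obtain ⟨i, h1, h2⟩ := hrec (j+1)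
      exact ⟨i, by show a (j + i + 1) = 0; convert h1 using 2; omega,
               by show a (j + i + 1 + 1) = 0; convert h2 using 2; omega⟩)

/-- digit sequence of a point -/
def digitSeq (β : ℝ) (x : ℝ) : ℕ → ℕ := fun i => (⌊β * (Tmap β)^[i] x⌋).toNat

lemma Tmap_mem_Ico {β : ℝ} (x : ℝ) : Tmap β x ∈ Set.Ico (0:ℝ) 1 :=
  ⟨Int.fract_nonneg _, Int.fract_lt_one _⟩

lemma Tmap_iter_mem_Ico {β : ℝ} {x : ℝ} (hx : x ∈ Set.Ico (0:ℝ) 1) (k : ℕ) :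
    (Tmap β)^[k] x ∈ Set.Ico (0:ℝ) 1 := by
  induction k with
  | zero => exact hx
  | succ k ih => rw [Function.iterate_succ_apply']; exact Tmap_mem_Ico _

include hβ1 in
lemma digit_floor {x : ℝ} (hx : x ∈ Set.Ico (0:ℝ) 1) (hβlt2 : β < 2) (i : ℕ) :
    ⌊β * (Tmap β)^[i] x⌋ = (digitSeq β x i : ℤ) ∧ digitSeq β x i ≤ 1 := by
  have hβ0 : (0:ℝ) < β := lt_trans one_pos hβ1
  have hy := Tmap_iter_mem_Ico hx (β := β) i
  have h0 : (0:ℝ) ≤ β * (Tmap β)^[i] x := mul_nonneg hβ0.le hy.1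
  have h2 : β * (Tmap β)^[i] x < 2 := by nlinarith [hy.2, hy.1]
  have hfl0 : (0:ℤ) ≤ ⌊β * (Tmap β)^[i] x⌋ := Int.le_floor.mpr (by exact_mod_cast h0)
  have hfl2 : ⌊β * (Tmap β)^[i] x⌋ < 2 := by
    have := Int.floor_le (β * (Tmap β)^[i] x)
    have h22 : (⌊β * (Tmap β)^[i] x⌋ : ℝ) < 2 := lt_of_le_of_lt this h2
    exact_mod_cast h22
  constructor
  · rw [digitSeq, Int.toNat_of_nonneg hfl0]
  · rw [digitSeq]
    omega

include hβ1 in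
lemma Tmap_succ_digit {x : ℝ} (hx : x ∈ Set.Ico (0:ℝ) 1) (hβlt2 : β < 2) (i : ℕ) :
    (Tmap β)^[i+1] x = β * (Tmap β)^[i] x - (digitSeq β x i : ℝ) := by
  rw [Function.iterate_succ_apply']
  rw [show Tmap β ((Tmap β)^[i] x) = Int.fract (β * (Tmap β)^[i] x) from rfl]
  rw [Int.fract, (digit_floor hβ1 hx hβlt2 i).1]
  push_cast
  ring

include hβ1 in
lemma digitSeq_bin {x : ℝ} (hx : x ∈ Set.Ico (0:ℝ) 1) (hβlt2 : β < 2) : Bin (digitSeq β x) :=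
  fun i => (digit_floor hβ1 hx hβlt2 i).2

include hβ1 hβ2 in
lemma digitSeq_no11 {x : ℝ} (hx : x ∈ Set.Ico (0:ℝ) 1) (hβlt2 : β < 2) : No11 (digitSeq β x) := by
  intro i hi
  have hβ0 : (0:ℝ) < β := lt_trans one_pos hβ1
  have hrec := Tmap_succ_digit hβ1 hx hβlt2 i
  have hy := Tmap_iter_mem_Ico hx (β := β) i
  have hy1 := Tmap_iter_mem_Ico hx (β := β) (i+1)
  rw [hi] at hrec
  -- T^{i+1} x = β T^i x - 1 < β - 1
  have hlt : (Tmap β)^[i+1] x < β - 1 := by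
    push_cast at hrec
    nlinarith [hy.2]
  -- β(β-1) = β² - β = 1
  have hne : β * (Tmap β)^[i+1] x < 1 := by nlinarith [hy1.1]
  have h0 : (0:ℝ) ≤ β * (Tmap β)^[i+1] x := mul_nonneg hβ0.le hy1.1
  have : ⌊β * (Tmap β)^[i+1] x⌋ = 0 := by
    apply Int.floor_eq_zero_iff.mpr
    constructor <;> simpa using (by first | exact h0 | exact hne)
  rw [digitSeq, this]
  rfl

include hβ1 in
lemma val_digitSeq {x : ℝ} (hx : x ∈ Set.Ico (0:ℝ) 1) (hβlt2 : β < 2) :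
    val β (digitSeq β x) = x := by
  have hβ0 : (0:ℝ) < β := lt_trans one_pos hβ1
  have key : ∀ N, ∑ i ∈ Finset.range N, ((digitSeq β x i : ℝ))/β^(i+1)
      = x - (Tmap β)^[N] x / β^N := by
    intro N
    induction N with
    | zero => simp
    | succ N ih =>
      rw [Finset.sum_range_succ, ih, Tmap_succ_digit hβ1 hx hβlt2 N]
      have h1 : (β:ℝ)^N ≠ 0 := by positivity
      have h2 : (β:ℝ)^(N+1) ≠ 0 := by positivity
      rw [pow_succ]
      field_simp
      ring
  have hsum := summable_val hβ1 (digitSeq_bin hβ1 hx hβlt2)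
  have htend : Tendsto (fun N => ∑ i ∈ Finset.range N, ((digitSeq β x i : ℝ))/β^(i+1)) atTop (nhds x) := by
    have h1 : Tendsto (fun N : ℕ => (Tmap β)^[N] x / β^N) atTop (nhds 0) := by
      have hg : Tendsto (fun N : ℕ => (β⁻¹)^N) atTop (nhds 0) :=
        tendsto_pow_atTop_nhds_zero_of_lt_one (by positivity)
          (by rw [inv_lt_one_iff₀]; right; exact hβ1)
      apply squeeze_zero (g := fun N : ℕ => (β⁻¹)^N)
        (fun N => div_nonneg (Tmap_iter_mem_Ico hx N).1 (by positivity))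
        (fun N => ?_) hg
      show (Tmap β)^[N] x / β ^ N ≤ β⁻¹ ^ N
      rw [inv_pow, ← one_div]
      gcongr
      exact (Tmap_iter_mem_Ico hx N).2.le
    have := Tendsto.sub (tendsto_const_nhds (x := x) (f := atTop)) h1
    rw [sub_zero] at this
    exact this.congr (fun N => (key N).symm)
  exact (hsum.hasSum_iff_tendsto_nat.mpr htend).tsum_eq

lemma digitSeq_Tmap (β : ℝ) (x : ℝ) : digitSeq β (Tmap β x) = shift (digitSeq β x) := by
  funext i
  show (⌊β * (Tmap β)^[i] (Tmap β x)⌋).toNat = (⌊β * (Tmap β)^[i+1] x⌋).toNat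
  rw [Function.iterate_succ_apply]

lemma digitSeq_Tmap_iter (β : ℝ) (x : ℝ) (k : ℕ) :
    digitSeq β ((Tmap β)^[k] x) = shift^[k] (digitSeq β x) := by
  induction k with
  | zero => rfl
  | succ k ih =>
    rw [Function.iterate_succ_apply', Function.iterate_succ_apply', digitSeq_Tmap, ih]

end Beta


lemma succ_mod {n : ℕ} (hn : 1 < n) (i : ℕ) : (i+1) % n = (i % n + 1) % n := by
  conv_lhs => rw [Nat.add_mod]
  rw [Nat.one_mod_eq_one.mpr (by omega)]

lemma mod_eq_zero_helper {n : ℕ} (hn : 0 < n) (k : ℕ) : (k + (n - k % n)) % n = 0 := by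
  have h1 : n * (k / n) + k % n = k := Nat.div_add_mod k n
  have h2 : k % n < n := Nat.mod_lt _ hn
  have h4 : n * (k / n + 1) = n * (k / n) + n := by ring
  have h3 : k + (n - k % n) = n * (k / n + 1) := by omega
  rw [h3, Nat.mul_mod_right]

lemma mod_eq_one_helper {n : ℕ} (hn : 1 < n) (k : ℕ) : (k + (n - k % n) + 1) % n = 1 := by
  have h1 : n * (k / n) + k % n = k := Nat.div_add_mod k n
  have h2 : k % n < n := Nat.mod_lt _ (by omega)
  have h4 : n * (k / n + 1) = n * (k / n) + n := by ring
  have h3 : k + (n - k % n) + 1 = n * (k / n + 1) + 1 := by omega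
  rw [h3, Nat.mul_add_mod, Nat.one_mod_eq_one.mpr (by omega)]

def dig (m i : ℕ) : ℕ :=
  if (2 ≤ i % (4*m+4) ∧ i % (4*m+4) < 2*m+1 ∧ i % (4*m+4) % 2 = 0)
      ∨ (2*m+3 ≤ i % (4*m+4) ∧ i % (4*m+4) % 2 = 1) then 1 else 0

def digCond (m i : ℕ) : Prop :=
  (2 ≤ i ∧ i < 2*m+1 ∧ i % 2 = 0) ∨ (2*m+3 ≤ i ∧ i % 2 = 1)

instance (m i : ℕ) : Decidable (digCond m i) := by unfold digCond; infer_instance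

lemma dig_mod (m i : ℕ) : dig m i = dig m (i % (4*m+4)) := by
  unfold dig
  rw [Nat.mod_mod_of_dvd _ dvd_rfl]

lemma dig_eq (m i : ℕ) (h : i < 4*m+4) : dig m i = if digCond m i then 1 else 0 := by
  unfold dig digCond
  rw [Nat.mod_eq_of_lt h]

lemma dig_bin (m : ℕ) : Bin (dig m) := by
  intro i
  unfold dig
  split <;> omega

lemma dig_period (m i : ℕ) : dig m (i + (4*m+4)) = dig m i := by
  rw [dig_mod, Nat.add_mod_right, ← dig_mod]

lemma dig_period_mul (m i q : ℕ) : dig m (i + q * (4*m+4)) = dig m i := by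
  induction q with
  | zero => simp
  | succ q ih => rw [Nat.succ_mul, ← Nat.add_assoc, dig_period, ih]

lemma dig_cases (m i : ℕ) (h : i < 4*m+4) :
    (dig m i = 1 ∧ digCond m i) ∨ (dig m i = 0 ∧ ¬ digCond m i) := by
  rw [dig_eq m i h]
  by_cases hc : digCond m i
  · left; simp [hc]
  · right; simp [hc]

lemma dig_no11 (m : ℕ) (hm : 1 ≤ m) : No11 (dig m) := by
  intro i hi
  have hr : i % (4*m+4) < (4*m+4) := Nat.mod_lt _ (by omega)
  rw [dig_mod] at hi
  rcases dig_cases m (i % (4*m+4)) hr with ⟨h1, hc⟩ | ⟨h0, _⟩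
  · -- dig (i+1):
    rw [dig_mod]
    have h1n : (i+1) % (4*m+4) = (i % (4*m+4) + 1) % (4*m+4) := succ_mod (by omega) i
    rcases Nat.lt_or_ge (i % (4*m+4) + 1) (4*m+4) with hlt | hge
    · rw [h1n, Nat.mod_eq_of_lt hlt]
      rcases dig_cases m (i % (4*m+4) + 1) hlt with ⟨_, hc2⟩ | ⟨h0, _⟩
      · exfalso; unfold digCond at hc hc2; omega
      · exact h0
    · -- i % (4*m+4) = (4*m+4) - 1 = 4m+3: digCond holds there; then (i%n+1)%n = 0
      have heq : i % (4*m+4) + 1 = (4*m+4) := by omega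
      have h0n : (i % (4*m+4) + 1) % (4*m+4) = 0 := by rw [heq, Nat.mod_self]
      rw [h1n, h0n]
      rcases dig_cases m 0 (by omega) with ⟨_, hc2⟩ | ⟨h0, _⟩
      · exfalso; unfold digCond at hc2; omega
      · exact h0
  · omega

lemma dig_00 (m k : ℕ) (hm : 1 ≤ m) (h0 : dig m k = 0) (h1 : dig m (k+1) = 0) :
    k % (4*m+4) = 0 ∨ k % (4*m+4) = 2*m+1 := by
  have hr : k % (4*m+4) < (4*m+4) := Nat.mod_lt _ (by omega)
  rw [dig_mod] at h0 h1
  by_contra hcon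
  push_neg at hcon
  rcases dig_cases m (k % (4*m+4)) hr with ⟨h1', _⟩ | ⟨_, hc⟩
  · omega
  · rcases Nat.lt_or_ge (k % (4*m+4) + 1) (4*m+4) with hlt | hge
    · have h1n : (k+1) % (4*m+4) = k % (4*m+4) + 1 := by
        rw [succ_mod (show 1 < (4*m+4) by omega) k, Nat.mod_eq_of_lt hlt]
      rw [h1n] at h1
      rcases dig_cases m (k % (4*m+4) + 1) hlt with ⟨h1', _⟩ | ⟨_, hc2⟩
      · omega
      · unfold digCond at hc hc2; omega
    · -- k % (4*m+4) = (4*m+4)-1 = 4m+3: digCond holds (odd, ≥ 2m+3): dig = 1 contradiction with h0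
      unfold digCond at hc; omega

lemma dig_rec00 (m : ℕ) (hm : 1 ≤ m) : Rec00 (dig m) := by
  intro k
  -- choose j so that (k+j) % (4*m+4) = 0
  refine ⟨(4*m+4) - k % (4*m+4), ?_, ?_⟩
  · have h : (k + ((4*m+4) - k % (4*m+4))) % (4*m+4) = 0 := mod_eq_zero_helper (by omega) k
    rw [dig_mod, h, dig_eq m 0 (by omega), if_neg]
    unfold digCond
    omega
  · have h : (k + ((4*m+4) - k % (4*m+4)) + 1) % (4*m+4) = 1 := mod_eq_one_helper (by omega) k
    rw [dig_mod, h, dig_eq m 1 (by omega), if_neg]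
    unfold digCond
    omega

lemma dig_first_block (m i : ℕ) (h : i < 2*m+1) :
    dig m i = if 2 ≤ i ∧ i % 2 = 0 then 1 else 0 := by
  rw [dig_eq m i (by omega)]
  by_cases hc : 2 ≤ i ∧ i % 2 = 0
  · rw [if_pos hc, if_pos (show digCond m i from Or.inl ⟨hc.1, h, hc.2⟩)]
  · rw [if_neg hc, if_neg (show ¬ digCond m i by unfold digCond; omega)]

lemma dig_second_block (m i : ℕ) (h1 : 2*m+1 ≤ i) (h2 : i < 4*m+4) :
    dig m i = if 2*m+3 ≤ i ∧ i % 2 = 1 then 1 else 0 := by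
  rw [dig_eq m i h2]
  by_cases hc : 2*m+3 ≤ i ∧ i % 2 = 1
  · rw [if_pos (show digCond m i from Or.inr hc), if_pos hc]
  · rw [if_neg (show ¬ digCond m i by unfold digCond; omega), if_neg hc]

lemma per_mul {n : ℕ} {a : ℕ → ℕ} (hper : ∀ i, a (i + n) = a i) (i q : ℕ) :
    a (i + q * n) = a i := by
  induction q with
  | zero => simp
  | succ q ih => rw [Nat.succ_mul, ← Nat.add_assoc, hper, ih]

lemma cmp_block (m g : ℕ) (hm : 1 ≤ m) (hg : g + 2 ≤ m) (a : ℕ → ℕ)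
    (hblock : ∀ i, i < 3+2*g → a i = if 2 ≤ i ∧ i % 2 = 0 then 1 else 0)
    (h3 : a (3+2*g) = 0) (h4 : a (4+2*g) = 0) : seqLt a (dig m) := by
  refine ⟨4+2*g, ?_, ?_⟩
  · intro i hi
    rcases Nat.lt_or_ge i (3+2*g) with h | h
    · rw [hblock i h, dig_first_block m i (by omega)]
    · have hieq : i = 3+2*g := by omega
      rw [hieq, h3, dig_first_block m (3+2*g) (by omega), if_neg (by omega)]
  · rw [h4, dig_first_block m (4+2*g) (by omega), if_pos (by omega)]
    omega

lemma eq_dig_of_blocks (m : ℕ) (hm : 1 ≤ m) (a : ℕ → ℕ)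
    (hper : ∀ i, a (i + (4*m+4)) = a i)
    (hb1 : ∀ i, i < 2*m+1 → a i = if 2 ≤ i ∧ i % 2 = 0 then 1 else 0)
    (hb2 : ∀ j, j < 2*m+3 → a (2*m+1 + j) = if 2 ≤ j ∧ j % 2 = 0 then 1 else 0) :
    a = dig m := by
  funext i
  have ha : a i = a (i % (4*m+4)) := by
    have hmd := Nat.mod_add_div i (4*m+4)
    have hcomm : (4*m+4) * (i / (4*m+4)) = (i / (4*m+4)) * (4*m+4) := Nat.mul_comm _ _
    have h2 : i = i % (4*m+4) + (i / (4*m+4)) * (4*m+4) := by omega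
    conv_lhs => rw [h2]
    exact per_mul hper _ _
  rw [ha, dig_mod]
  set r := i % (4*m+4) with hr
  have hrlt : r < 4*m+4 := Nat.mod_lt _ (by omega)
  rcases Nat.lt_or_ge r (2*m+1) with h | h
  · rw [hb1 r h, dig_first_block m r h]
  · have hj : r = 2*m+1 + (r - (2*m+1)) := by omega
    rw [hj, hb2 _ (by omega), dig_second_block m _ (by omega) (by omega)]
    by_cases hc : 2 ≤ r - (2*m+1) ∧ (r - (2*m+1)) % 2 = 0
    · rw [if_pos hc, if_pos (by omega)]
    · rw [if_neg hc, if_neg (by omega)]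

lemma comb (m : ℕ) (hm : 1 ≤ m) (a : ℕ → ℕ) (ha : Bin a) (h11 : No11 a)
    (hper : ∀ i, a (i + (4*m+4)) = a i) (hnp2 : ¬ ∀ i, a (i+2) = a i) :
    ∃ k, seqLe (shift^[k] a) (dig m) := by
  classical
  by_cases hA : ∃ p, a p = 0 ∧ a (p+1) = 0 ∧ a (p+2) = 0
  · obtain ⟨p, h0, h1, h2⟩ := hA
    refine ⟨p, Or.inl ⟨2, ?_, ?_⟩⟩
    · intro i hi
      interval_cases i
      · rw [shift_iter]
        simp only [Nat.zero_add]
        rw [h0, dig_first_block m 0 (by omega), if_neg (by omega)]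
      · rw [shift_iter]
        rw [show 1 + p = p + 1 by omega, h1, dig_first_block m 1 (by omega), if_neg (by omega)]
    · rw [shift_iter, show 2 + p = p + 2 by omega, h2,
        dig_first_block m 2 (by omega), if_pos (by omega)]
      omega
  · push_neg at hA
    have h000 : ∀ p, a p = 0 → a (p+1) = 0 → a (p+2) = 1 := by
      intro p hp hp1
      have := hA p hp hp1
      have := ha (p+2)
      omega
    -- P q := double zero at q
    set P : ℕ → Prop := fun q => a q = 0 ∧ a (q+1) = 0 with hP
    have hPper : ∀ q, P q → P (q + (4*m+4)) := by
      intro q ⟨hq0, hq1⟩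
      refine ⟨by rw [hper q]; exact hq0, ?_⟩
      have h := hper (q+1)
      rw [show q+1+(4*m+4) = q+(4*m+4)+1 by omega] at h
      rw [h]; exact hq1
    have h00ex : ∃ p, P p := by
      by_contra hc
      push_neg at hc
      apply hnp2
      intro i
      have hbi := ha i
      have hbi1 := ha (i+1)
      have hbi2 := ha (i+2)
      rcases Nat.eq_zero_or_pos (a i) with h0 | h1
      · -- a i = 0: a(i+1) ≠ 0 (else P i): a(i+1)=1 → a(i+2)=0
        have hnot := hc i
        rw [hP] at hnot
        simp only [not_and] at hnot
        have h1' : a (i+1) = 1 := by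
          rcases Nat.eq_zero_or_pos (a (i+1)) with hz | _
          · exact absurd hz (hnot h0)
          · omega
        have h5 := h11 (i+1) h1'
        rw [show i+1+1 = i+2 by omega] at h5
        omega
      · -- a i = 1: a(i+1) = 0; a(i+2) ≠ 0 (else P (i+1)): a(i+2) = 1
        have h1' : a i = 1 := by omega
        have h2' := h11 i h1'
        have hnot := hc (i+1)
        rw [hP] at hnot
        simp only [not_and] at hnot
        have h3' : a (i+2) ≠ 0 := by
          have := hnot h2'
          rwa [show i+1+1 = i+2 by omega] at this
        omega
    -- next-00 function
    have hNext : ∀ q, P q → ∃ d, (2 ≤ d ∧ P (q + d)) ∧ ∀ e, 2 ≤ e → e < d → ¬ P (q + e) := by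
      intro q hq
      have hex : ∃ d, 2 ≤ d ∧ P (q + d) := ⟨4*m+4, by omega, hPper q hq⟩
      refine ⟨Nat.find hex, Nat.find_spec hex, ?_⟩
      intro e he hlt hPe
      exact Nat.find_min hex hlt ⟨he, hPe⟩
    -- alternation within a gap
    have hAlt : ∀ q d, P q → P (q + d) → (∀ e, 2 ≤ e → e < d → ¬ P (q + e)) → 2 ≤ d →
        ∃ g, d = 3 + 2*g ∧ ∀ i, i < d → a (q + i) = if 2 ≤ i ∧ i % 2 = 0 then 1 else 0 := by
      intro q d hq hqd hmin hd2
      have hC : ∀ j, (2+2*j < d → a (q+(2+2*j)) = 1) ∧ (3+2*j ≤ d → a (q+(3+2*j)) = 0) := by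
        intro j
        induction j with
        | zero =>
          have h1 : a (q+2) = 1 := h000 q hq.1 hq.2
          have h2 : a (q+3) = 0 := by
            have := h11 (q+2) h1
            rwa [show q+2+1 = q+3 by omega] at this
          exact ⟨fun _ => by rwa [show q+(2+2*0) = q+2 by omega],
                 fun _ => by rwa [show q+(3+2*0) = q+3 by omega]⟩
        | succ j ih =>
          have hpart1 : 2+2*(j+1) < d → a (q+(2+2*(j+1))) = 1 := by
            intro hlt
            have h0 : a (q+(3+2*j)) = 0 := ih.2 (by omega)
            have hnP := hmin (3+2*j) (by omega) (by omega)
            rw [hP] at hnP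
            simp only [not_and] at hnP
            have h1 : a (q+(3+2*j)+1) ≠ 0 := hnP h0
            have hb := ha (q+(3+2*j)+1)
            have h2 : a (q+(3+2*j)+1) = 1 := by omega
            rwa [show q+(2+2*(j+1)) = q+(3+2*j)+1 by omega]
          refine ⟨hpart1, ?_⟩
          intro hle
          rcases Nat.lt_or_ge (3+2*(j+1)) d with hlt | hge
          · have h1 : a (q+(2+2*(j+1))) = 1 := hpart1 (by omega)
            have h2 := h11 _ h1
            rwa [show q+(3+2*(j+1)) = q+(2+2*(j+1))+1 by omega]
          · have heq : 3+2*(j+1) = d := by omega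
            rw [show q+(3+2*(j+1)) = q + d by omega]
            exact hqd.1
      -- d is odd
      have hodd : d % 2 = 1 := by
        by_contra hev
        have hev2 : d % 2 = 0 := by omega
        rcases Nat.lt_or_ge d 3 with hd3 | hd3
        · -- d = 2: a(q+2) = 1 but P (q+2)
          have hd2' : d = 2 := by omega
          have h1 : a (q+2) = 1 := h000 q hq.1 hq.2
          have h2 := hqd.1
          rw [hd2'] at h2
          omega
        · -- d even ≥ 4: a(q+d-1) = 0 and ¬P(q+d-1) forces a(q+d)=1, contra P(q+d)
          have h1 : a (q+(3+2*((d-4)/2))) = 0 := (hC ((d-4)/2)).2 (by omega)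
          have h1' : a (q+(d-1)) = 0 := by rwa [show 3+2*((d-4)/2) = d-1 by omega] at h1
          have hnP := hmin (d-1) (by omega) (by omega)
          rw [hP] at hnP
          simp only [not_and] at hnP
          have h2 : a (q+(d-1)+1) ≠ 0 := hnP h1'
          have h3 : a (q+d) = 0 := hqd.1
          rw [show q+(d-1)+1 = q+d by omega] at h2
          exact h2 h3
      refine ⟨(d-3)/2, by omega, ?_⟩
      intro i hi
      by_cases hc : 2 ≤ i ∧ i % 2 = 0
      · rw [if_pos hc]
        have := (hC ((i-2)/2)).1 (by omega)
        rwa [show q+(2+2*((i-2)/2)) = q+i by omega] at this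
      · rw [if_neg hc]
        rcases Nat.lt_or_ge i 2 with h2 | h2
        · interval_cases i
          · exact hq.1
          · exact hq.2
        · -- i odd ≥ 3
          have := (hC ((i-3)/2)).2 (by omega)
          rwa [show q+(3+2*((i-3)/2)) = q+i by omega] at this
    obtain ⟨p₀, hp₀⟩ := h00ex
    obtain ⟨d₁, ⟨hd₁2, hPd₁⟩, hmin₁⟩ := hNext p₀ hp₀
    obtain ⟨g₁, hg₁, hblk₁⟩ := hAlt p₀ d₁ hp₀ hPd₁ hmin₁ hd₁2
    by_cases hcase₁ : g₁ + 2 ≤ m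
    · refine ⟨p₀, Or.inl ?_⟩
      apply cmp_block m g₁ hm hcase₁
      · intro i hi
        rw [shift_iter, show i + p₀ = p₀ + i by omega]
        exact hblk₁ i (by omega)
      · rw [shift_iter, show 3+2*g₁ + p₀ = p₀ + d₁ by omega]
        exact hPd₁.1
      · rw [shift_iter, show 4+2*g₁ + p₀ = p₀ + d₁ + 1 by omega]
        exact hPd₁.2
    · obtain ⟨d₂, ⟨hd₂2, hPd₂⟩, hmin₂⟩ := hNext (p₀ + d₁) hPd₁
      obtain ⟨g₂, hg₂, hblk₂⟩ := hAlt (p₀ + d₁) d₂ hPd₁ hPd₂ hmin₂ hd₂2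
      by_cases hcase₂ : g₂ + 2 ≤ m
      · refine ⟨p₀ + d₁, Or.inl ?_⟩
        apply cmp_block m g₂ hm hcase₂
        · intro i hi
          rw [shift_iter, show i + (p₀ + d₁) = p₀ + d₁ + i by omega]
          exact hblk₂ i (by omega)
        · rw [shift_iter, show 3+2*g₂ + (p₀ + d₁) = p₀ + d₁ + d₂ by omega]
          exact hPd₂.1
        · rw [shift_iter, show 4+2*g₂ + (p₀ + d₁) = p₀ + d₁ + d₂ + 1 by omega]
          exact hPd₂.2
      · have hd₁n : d₁ ≤ 4*m+4 := by
          by_contra h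
          exact hmin₁ (4*m+4) (by omega) (by omega) (hPper p₀ hp₀)
        have hd₁ne : d₁ ≠ 4*m+4 := by omega
        have hd₁n1 : d₁ ≠ 4*m+3 := by
          intro h
          have h1 := h000 (p₀ + d₁) hPd₁.1 hPd₁.2
          rw [h, show p₀+(4*m+3)+2 = (p₀+1)+(4*m+4) by omega, hper (p₀+1)] at h1
          have := hp₀.2
          omega
        have hd₂le : d₂ ≤ 4*m+4 - d₁ := by
          by_contra h
          push_neg at h
          apply hmin₂ (4*m+4 - d₁) (by omega) (by omega)
          rw [show p₀ + d₁ + (4*m+4 - d₁) = p₀ + (4*m+4) by omega]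
          exact hPper p₀ hp₀
        have hsum : d₁ + d₂ = 4*m+4 ∨ d₁ + d₂ = 4*m+2 := by omega
        rcases hsum with hsum | hsum
        · have hgs : (g₁ = m - 1 ∧ g₂ = m) ∨ (g₁ = m ∧ g₂ = m - 1) := by omega
          rcases hgs with ⟨hg1e, hg2e⟩ | ⟨hg1e, hg2e⟩
          · refine ⟨p₀, Or.inr ?_⟩
            refine eq_dig_of_blocks m hm _ ?_ ?_ ?_
            · intro i
              rw [shift_iter, shift_iter, show i + (4*m+4) + p₀ = (i + p₀) + (4*m+4) by omega,
                hper (i + p₀)]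
            · intro i hi
              rw [shift_iter, show i + p₀ = p₀ + i by omega]
              rw [hblk₁ i (by omega)]
            · intro j hj
              rw [shift_iter, show 2*m+1+j+p₀ = p₀ + d₁ + j by omega]
              rw [hblk₂ j (by omega)]
          · refine ⟨p₀ + d₁, Or.inr ?_⟩
            refine eq_dig_of_blocks m hm _ ?_ ?_ ?_
            · intro i
              rw [shift_iter, shift_iter,
                show i + (4*m+4) + (p₀ + d₁) = (i + (p₀ + d₁)) + (4*m+4) by omega,
                hper (i + (p₀ + d₁))]
            · intro i hi
              rw [shift_iter, show i + (p₀ + d₁) = p₀ + d₁ + i by omega]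
              rw [hblk₂ i (by omega)]
            · intro j hj
              rw [shift_iter, show 2*m+1+j+(p₀ + d₁) = (p₀ + j) + (4*m+4) by omega,
                hper (p₀ + j)]
              rw [hblk₁ j (by omega)]
        · exfalso
          have h1 := h000 (p₀ + d₁ + d₂) hPd₂.1 hPd₂.2
          rw [show p₀ + d₁ + d₂ + 2 = p₀ + (4*m+4) by omega, hper p₀] at h1
          rw [hp₀.1] at h1
          exact absurd h1 (by omega)

lemma add_mod_right' (n i k : ℕ) : (i + k) % n = (i + k % n) % n := by
  conv_lhs => rw [Nat.add_mod]
  conv_rhs => rw [Nat.add_mod, Nat.mod_mod_of_dvd _ dvd_rfl]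

lemma dig_add_of_lt (m k i : ℕ) (h : i + k % (4*m+4) < 4*m+4) :
    dig m (i + k) = dig m (i + k % (4*m+4)) := by
  rw [dig_mod m (i+k), add_mod_right', Nat.mod_eq_of_lt h]

lemma dig_min_shift (m : ℕ) (hm : 1 ≤ m) (k : ℕ) :
    seqLe (dig m) (shift^[k] (dig m)) := by
  have hn1 : 1 < 4*m+4 := by omega
  have hr : k % (4*m+4) < 4*m+4 := Nat.mod_lt _ (by omega)
  have hd0 : dig m 0 = 0 := by
    rw [dig_first_block m 0 (by omega), if_neg (by omega)]
  have hd1 : dig m 1 = 0 := by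
    rw [dig_first_block m 1 (by omega), if_neg (by omega)]
  have hlast : dig m (4*m+3) = 1 := by
    rw [dig_second_block m (4*m+3) (by omega) (by omega), if_pos (by omega)]
  rcases dig_cases m (k % (4*m+4)) hr with ⟨h1, _⟩ | ⟨h0, _⟩
  · -- first digit of shift is 1
    left
    refine ⟨0, fun i hi => absurd hi (by omega), ?_⟩
    rw [shift_iter, Nat.zero_add, dig_mod m k, h1, hd0]
    omega
  · -- first digit of shift is 0
    have hrne : k % (4*m+4) ≠ 4*m+3 := by
      intro h
      rw [h, hlast] at h0
      omega
    have hshift1 : dig m (1 + k) = dig m (k % (4*m+4) + 1) := by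
      rw [dig_add_of_lt m k 1 (by omega), Nat.add_comm]
    rcases Nat.eq_zero_or_pos (dig m (k % (4*m+4) + 1)) with hD1 | hD1
    · -- 00 at k: k % n ∈ {0, 2m+1}
      have h00 := dig_00 m (k % (4*m+4)) hm (by rwa [dig_mod m (k % (4*m+4)), Nat.mod_mod_of_dvd _ dvd_rfl]) (by rwa [dig_mod m _, Nat.mod_eq_of_lt (by omega)])
      rw [Nat.mod_eq_of_lt hr] at h00
      rcases h00 with hz | hmid
      · -- shift by multiple of period: equality
        right
        funext i
        rw [shift_iter, dig_mod m (i+k), add_mod_right', hz, Nat.add_zero, ← dig_mod]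
      · -- k ≡ 2m+1
        left
        refine ⟨2*m+2, ?_, ?_⟩
        · intro i hi
          rw [shift_iter, dig_add_of_lt m k i (by omega), hmid]
          have hiff : digCond m i ↔ digCond m (i + (2*m+1)) := by
            unfold digCond
            omega
          rw [dig_eq m i (by omega), dig_eq m (i + (2*m+1)) (by omega)]
          by_cases hA : digCond m i
          · rw [if_pos hA, if_pos (hiff.mp hA)]
          · rw [if_neg hA, if_neg (fun hB => hA (hiff.mpr hB))]
        · rw [shift_iter, dig_add_of_lt m k (2*m+2) (by omega), hmid,
            show 2*m+2 + (2*m+1) = 4*m+3 by omega, hlast,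
            dig_second_block m (2*m+2) (by omega) (by omega), if_neg (by omega)]
          omega
    · -- second digit of shift is 1
      left
      refine ⟨1, ?_, ?_⟩
      · intro i hi
        have hi0 : i = 0 := by omega
        rw [hi0, shift_iter, Nat.zero_add, dig_mod m k, h0, hd0]
      · rw [shift_iter, hshift1, hd1]
        omega

lemma dig_not_per (m : ℕ) (hm : 1 ≤ m) (d : ℕ) (h0 : 0 < d) (hlt : d < 4*m+4)
    (hcon : ∀ i, dig m (i + d) = dig m i) : False := by
  have hd0 : dig m 0 = 0 := by
    rw [dig_first_block m 0 (by omega), if_neg (by omega)]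
  have hd1 : dig m 1 = 0 := by
    rw [dig_first_block m 1 (by omega), if_neg (by omega)]
  have hd2 : dig m 2 = 1 := by
    rw [dig_first_block m 2 (by omega), if_pos (by omega)]
  have hA : dig m d = 0 := by
    have := hcon 0
    rwa [Nat.zero_add, hd0] at this
  have hB : dig m (d+1) = 0 := by
    have := hcon 1
    rwa [Nat.add_comm 1 d, hd1] at this
  have h00 := dig_00 m d hm hA hB
  rw [Nat.mod_eq_of_lt hlt] at h00
  rcases h00 with hz | hmid
  · omega
  · -- d = 2m+1: dig (2 + 2d) = dig 2 = 1 but 2+2d = 4m+4 ≡ 0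
    have h1 := hcon 2
    have h2 := hcon (2 + d)
    rw [h1, hd2] at h2
    rw [show 2 + d + d = 0 + (4*m+4) by omega, dig_period, hd0] at h2
    omega

lemma flat_len (k : ℕ) : ((List.replicate k ([0,1] : List ℕ)).flatten).length = 2*k := by
  induction k with
  | zero => simp
  | succ k ih => simp [List.replicate_succ, ih]; omega

lemma flat_getD_s8 (k j : ℕ) : ((List.replicate k ([0,1] : List ℕ)).flatten).getD j 0
    = if j < 2*k ∧ j % 2 = 1 then 1 else 0 := by
  induction k generalizing j with
  | zero => simp
  | succ k ih =>
    rw [List.replicate_succ, List.flatten_cons]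
    match j with
    | 0 => simp
    | 1 =>
      rw [show ([0,1] : List ℕ) ++ (List.replicate k ([0,1] : List ℕ)).flatten
        = 0 :: 1 :: (List.replicate k ([0,1] : List ℕ)).flatten by simp]
      rw [List.getD_cons_succ, List.getD_cons_zero, if_pos (by omega)]
    | (j+2) =>
      rw [show ([0,1] : List ℕ) ++ (List.replicate k ([0,1] : List ℕ)).flatten
        = 0 :: 1 :: (List.replicate k ([0,1] : List ℕ)).flatten by simp]
      rw [List.getD_cons_succ, List.getD_cons_succ, ih j]
      by_cases hc : j < 2*k ∧ j % 2 = 1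
      · rw [if_pos hc, if_pos (by omega)]
      · rw [if_neg hc, if_neg (by omega)]

lemma wordSeq_eq_dig (m : ℕ) (hm : 1 ≤ m) :
    wordSeq ([0,0,1] ++ (List.replicate (m - 1) ([0,1] : List ℕ)).flatten
      ++ [0,0,1] ++ (List.replicate m ([0,1] : List ℕ)).flatten) = dig m := by
  set X := (List.replicate (m - 1) ([0,1] : List ℕ)).flatten with hX
  set Y := (List.replicate m ([0,1] : List ℕ)).flatten with hY
  have hXlen : X.length = 2*(m-1) := flat_len (m-1)
  have hYlen : Y.length = 2*m := flat_len m
  have hL : ([0,0,1] ++ X ++ [0,0,1] ++ Y).length = 4*m+4 := by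
    simp [List.length_append, hXlen, hYlen]
    omega
  have hassoc : [0,0,1] ++ X ++ [0,0,1] ++ Y = ([0,0,1] : List ℕ) ++ (X ++ ([0,0,1] ++ Y)) := by
    simp [List.append_assoc]
  funext i
  show ([0,0,1] ++ X ++ [0,0,1] ++ Y).getD (i % ([0,0,1] ++ X ++ [0,0,1] ++ Y).length) 0 = dig m i
  rw [hL, dig_mod]
  have hr : i % (4*m+4) < 4*m+4 := Nat.mod_lt _ (by omega)
  set r := i % (4*m+4) with hrdef
  clear_value r
  clear hrdef i
  rw [hassoc]
  rcases Nat.lt_or_ge r 3 with h3 | h3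
  · rw [List.getD_append _ _ _ r (by simp; omega)]
    interval_cases r
    · rw [dig_first_block m 0 (by omega), if_neg (by omega)]; rfl
    · rw [dig_first_block m 1 (by omega), if_neg (by omega)]; rfl
    · rw [dig_first_block m 2 (by omega), if_pos (by omega)]; rfl
  · rw [List.getD_append_right _ _ _ r (by simp; omega)]
    have hlen3 : ([0,0,1] : List ℕ).length = 3 := by rfl
    rw [hlen3]
    rcases Nat.lt_or_ge r (2*m+1) with h2m | h2m
    · -- inside X
      rw [List.getD_append _ _ _ _ (by rw [hXlen]; omega), hX, flat_getD_s8]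
      rw [dig_first_block m r h2m]
      by_cases hc : r - 3 < 2*(m-1) ∧ (r-3) % 2 = 1
      · rw [if_pos hc, if_pos (by omega)]
      · rw [if_neg hc, if_neg (by omega)]
    · -- past X
      rw [List.getD_append_right _ _ _ _ (by rw [hXlen]; omega), hXlen]
      rw [dig_second_block m r h2m hr]
      rcases Nat.lt_or_ge (r - 3 - 2*(m-1)) 3 with hB | hB
      · rw [List.getD_append _ _ _ _ (by rw [hlen3]; omega)]
        have : r - 3 - 2*(m-1) = 0 ∨ r - 3 - 2*(m-1) = 1 ∨ r - 3 - 2*(m-1) = 2 := by omega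
        rcases this with h | h | h <;> rw [h]
        · rw [if_neg (by omega)]; rfl
        · rw [if_neg (by omega)]; rfl
        · rw [if_pos (by omega)]; rfl
      · rw [List.getD_append_right _ _ _ _ (by rw [hlen3]; omega), hlen3, hY, flat_getD_s8]
        by_cases hc : r - 3 - 2*(m-1) - 3 < 2*m ∧ (r - 3 - 2*(m-1) - 3) % 2 = 1
        · rw [if_pos hc, if_pos (by omega)]
        · rw [if_neg hc, if_neg (by omega)]

theorem stmt8 (β : ℝ) (hβ : β = (1 + Real.sqrt 5) / 2) (m : ℕ) (hm : 1 ≤ m) :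
    S β (4 * m + 4) = val β (wordSeq ([0,0,1] ++ (List.replicate (m - 1) ([0,1] : List ℕ)).flatten ++ [0,0,1] ++ (List.replicate m ([0,1] : List ℕ)).flatten)) := by
  have h5 : Real.sqrt 5 ^ 2 = 5 := Real.sq_sqrt (by norm_num)
  have h5nn := Real.sqrt_nonneg 5
  have hβ1 : 1 < β := by rw [hβ]; nlinarith
  have hβlt2 : β < 2 := by rw [hβ]; nlinarith
  have hβ2 : β^2 = β + 1 := by rw [hβ]; nlinarith
  have hBin := dig_bin m
  have hNo11 := dig_no11 m hm
  have hRec := dig_rec00 m hm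
  have hd0 : dig m 0 = 0 := by
    rw [dig_first_block m 0 (by omega), if_neg (by omega)]
  have hd1 : dig m 1 = 0 := by
    rw [dig_first_block m 1 (by omega), if_neg (by omega)]
  set t : ℝ := val β (dig m) with ht
  have ht0 : 0 ≤ t := val_nonneg hβ1
  have ht1 : t < 1 := val_lt_one hβ1 hβ2 hBin hNo11 (j := 0) hd0 hd1
  have hiter : ∀ k, (Tmap β)^[k] t = val β (shift^[k] (dig m)) :=
    Tmap_iter_val hβ1 hβ2 hBin hNo11 hRec
  have hKmem : t ∈ K β t := by
    refine ⟨⟨ht0, ht1⟩, fun k => ?_⟩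
    rw [hiter k]
    exact val_le_val hβ1 hβ2 hBin hNo11 (hBin.shift k) (hNo11.shift k) (dig_min_shift m hm k)
  have hper_seq : shift^[4*m+4] (dig m) = dig m :=
    funext (fun i => by rw [shift_iter]; exact dig_period m i)
  have hTn : (Tmap β)^[4*m+4] t = t := by rw [hiter, hper_seq]
  have hpp : Function.IsPeriodicPt (Tmap β) (4*m+4) t := hTn
  have hmp : Function.minimalPeriod (Tmap β) t = 4*m+4 := by
    have hdvd := hpp.minimalPeriod_dvd
    have hpos := hpp.minimalPeriod_pos (by omega)
    set d := Function.minimalPeriod (Tmap β) t with hd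
    have hTd : (Tmap β)^[d] t = t := Function.iterate_minimalPeriod
    rw [hiter] at hTd
    have hseq : shift^[d] (dig m) = dig m :=
      val_inj hβ1 hβ2 (hBin.shift d) (hNo11.shift d) (hRec.shift d) hBin hNo11 hRec hTd
    have hperd : ∀ i, dig m (i + d) = dig m i := fun i => by
      have h := congrFun hseq i
      rwa [shift_iter] at h
    by_contra hne
    have hlt : d < 4*m+4 := lt_of_le_of_ne (Nat.le_of_dvd (by omega) hdvd) hne
    exact dig_not_per m hm d hpos hlt hperd
  have hMem : t ∈ {s | s ∈ Set.Ico (0:ℝ) 1 ∧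
      ∃ x ∈ K β s, Function.minimalPeriod (Tmap β) x = 4*m+4} := ⟨⟨ht0, ht1⟩, t, hKmem, hmp⟩
  have hUB : ∀ s ∈ {s | s ∈ Set.Ico (0:ℝ) 1 ∧
      ∃ x ∈ K β s, Function.minimalPeriod (Tmap β) x = 4*m+4}, s ≤ t := by
    rintro s ⟨⟨hs0, hs1⟩, x, ⟨hxIco, hxK⟩, hxmp⟩
    set A := digitSeq β x with hA
    have hABin : Bin A := digitSeq_bin hβ1 hxIco hβlt2
    have hANo11 : No11 A := digitSeq_no11 hβ1 hβ2 hxIco hβlt2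
    have hTnx : (Tmap β)^[4*m+4] x = x := by
      rw [← hxmp]; exact Function.iterate_minimalPeriod
    have hperA : ∀ i, A (i + (4*m+4)) = A i := by
      intro i
      show digitSeq β x (i + (4*m+4)) = digitSeq β x i
      unfold digitSeq
      rw [Function.iterate_add_apply, hTnx]
    have hTkval : ∀ k, (Tmap β)^[k] x = val β (shift^[k] A) := by
      intro k
      rw [← digitSeq_Tmap_iter β x k, val_digitSeq hβ1 (Tmap_iter_mem_Ico hxIco k) hβlt2]
    have hnp2 : ¬ ∀ i, A (i+2) = A i := by
      intro hcon
      have hs2 : (Tmap β)^[2] x = x := by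
        rw [hTkval 2]
        have he : shift^[2] A = A := funext fun i => by rw [shift_iter]; exact hcon i
        rw [he]
        exact val_digitSeq hβ1 hxIco hβlt2
      have hdvd : (4*m+4) ∣ 2 := by
        rw [← hxmp]; exact Function.IsPeriodicPt.minimalPeriod_dvd hs2
      have := Nat.le_of_dvd (by omega) hdvd
      omega
    obtain ⟨k, hk⟩ := comb m hm A hABin hANo11 hperA hnp2
    calc s ≤ (Tmap β)^[k] x := hxK k
      _ = val β (shift^[k] A) := hTkval k
      _ ≤ val β (dig m) := val_le_val hβ1 hβ2 (hABin.shift k) (hANo11.shift k) hBin hNo11 hk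
  rw [wordSeq_eq_dig m hm, ← ht]
  rw [show S β (4 * m + 4)
    = sSup {s | s ∈ Set.Ico (0:ℝ) 1 ∧ ∃ x ∈ K β s, Function.minimalPeriod (Tmap β) x = 4*m+4}
    from by rw [S, show 4 * m + 4 = 4*m+4 from rfl]]
  exact le_antisymm (csSup_le ⟨t, hMem⟩ hUB) (le_csSup ⟨t, fun y hy => hUB y hy⟩ hMem)
end
end
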